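/- arXiv:2506.04080 — 5 statements merged into one kernel-verified Lean document; each statement's English description precedes it below -/
import Mathlib

section
/- Let α_1,…,α_n be pairwise distinct elements of a finite field F_q, let δ ∈ F_q, and let k be an integer with 6 ≤ 2k ≤ n; take r = 1. Then G_2 · H_2ᵀ = 0 and the rows of H_2 are linearly independent over F_q, where S_2 = S_2(α_1,…,α_n) = (∑_{i=1}^n α_i)² − ∑_{1≤i<j≤n} α_i α_j; consequently H_2 is a parity check matrix for the code C_2 generated by G_2. -/
open Finset Matrix

/-- Elementary symmetric polynomial `σ_t` evaluated at the values `x 0, …, x (m-1)`. -/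
def esymmV {F : Type*} [CommRing F] {m : ℕ} (t : ℕ) (x : Fin m → F) : F :=
  ∑ A ∈ Finset.univ.powersetCard t, ∏ i ∈ A, x i

/-- Complete homogeneous symmetric polynomial `S_t` evaluated at `x 0, …, x (m-1)`. -/
def hsymmV {F : Type*} [CommRing F] {m : ℕ} (t : ℕ) (x : Fin m → F) : F :=
  ∑ d ∈ Finset.Nat.antidiagonalTuple m t, ∏ i, x i ^ d i

/-- The exponent of the `i`-th row (0-indexed): the elements of
`{0,…,k−r−1} ∪ {k−r+1,…,k}` in increasing order. -/
def expo (k r : ℕ) (i : Fin k) : ℕ := if (i : ℕ) < k - r then (i : ℕ) else (i : ℕ) + 1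

/-- The Vandermonde product `∏_{i<j} (α_j − α_i)`. -/
def vand {F : Type*} [CommRing F] {n : ℕ} (α : Fin n → F) : F :=
  ∏ i : Fin n, ∏ j ∈ Finset.Ioi i, (α j - α i)

/-- The matrix `G_{r,k}`: rows are `(α_1^e, …, α_n^e)` for
`e ∈ {0,…,k−r−1} ∪ {k−r+1,…,k}` in increasing order. -/
def Grk {F : Type*} [Field F] {n : ℕ} (α : Fin n → F) (k r : ℕ) : Matrix (Fin k) (Fin n) F :=
  Matrix.of fun i j => α j ^ expo k r i

/-- The matrix `G_1`: `G_{r,k}` with the extra column `(0,…,0,1)ᵀ` appended. -/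
def G1 {F : Type*} [Field F] {n : ℕ} (α : Fin n → F) (k r : ℕ) :
    Matrix (Fin k) (Fin (n + 1)) F :=
  Matrix.of fun i j =>
    if hj : (j : ℕ) < n then α ⟨j, hj⟩ ^ expo k r i
    else if (i : ℕ) = k - 1 then 1 else 0

/-- The matrix `G_2`: `G_1` with the extra column `(0,…,0,1,δ)ᵀ` appended
(entry `1` in row `k−1`, i.e. index `k−2`, and `δ` in row `k`, i.e. index `k−1`). -/
def G2 {F : Type*} [Field F] {n : ℕ} (α : Fin n → F) (k r : ℕ) (δ : F) :
    Matrix (Fin k) (Fin (n + 2)) F :=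
  Matrix.of fun i j =>
    if hj : (j : ℕ) < n then α ⟨j, hj⟩ ^ expo k r i
    else if (j : ℕ) = n then (if (i : ℕ) = k - 1 then 1 else 0)
    else (if (i : ℕ) = k - 2 then 1 else if (i : ℕ) = k - 1 then δ else 0)

/-- `u_i = ∏_{j ≠ i} (α_i − α_j)⁻¹`. -/
def uCoef {F : Type*} [Field F] {n : ℕ} (α : Fin n → F) (i : Fin n) : F :=
  ∏ j ∈ Finset.univ.erase i, (α i - α j)⁻¹

/-- `Λ_{r,i} = ∑_{j=0}^{r} (−1)^j σ_j α_i^{(n−k)+(r−1)−j}`. -/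
def Lam {F : Type*} [Field F] {n : ℕ} (α : Fin n → F) (k r : ℕ) (i : Fin n) : F :=
  ∑ j ∈ Finset.range (r + 1), (-1 : F) ^ j * esymmV j α * α i ^ ((n - k) + (r - 1) - j)

/-- Every `k×k` submatrix of `G` is nonsingular. -/
def allSubNonsing {F : Type*} [Field F] {k m : ℕ} (G : Matrix (Fin k) (Fin m) F) : Prop :=
  ∀ c : Fin k → Fin m, Function.Injective c → (G.submatrix id c).det ≠ 0

/-- The linear code spanned by the rows of `G`. -/
def rowSpan {F : Type*} [Field F] {k m : ℕ} (G : Matrix (Fin k) (Fin m) F) :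
    Submodule F (Fin m → F) :=
  Submodule.span F (Set.range fun i => G i)

/-- The dual code `C^⊥ = {x : ∑ x_i c_i = 0 for all c ∈ C}`, as a set. -/
def dualSet {F : Type*} [Field F] {m : ℕ} (C : Set (Fin m → F)) : Set (Fin m → F) :=
  {x | ∀ c ∈ C, ∑ i, x i * c i = 0}

/-- The extended code of `C` with respect to `w`. -/
def extCode {F : Type*} [Field F] {m : ℕ} (C : Set (Fin m → F)) (w : Fin m → F) :
    Set (Fin (m + 1) → F) :=
  {y | ∃ c ∈ C, (∀ i : Fin m, y (Fin.castSucc i) = c i) ∧ y (Fin.last m) = ∑ i, w i * c i}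

/-- The parity check matrix `H_{r,k}`: the first `n−k−1` rows are
`(u_1 α_1^e, …, u_n α_n^e)` for `e = 0,…,n−k−2` and the last row is
`(u_1 Λ_{r,1}, …, u_n Λ_{r,n})`. -/
def Hrk {F : Type*} [Field F] {n : ℕ} (α : Fin n → F) (k r : ℕ) :
    Matrix (Fin (n - k)) (Fin n) F :=
  Matrix.of fun i j =>
    if (i : ℕ) < n - k - 1 then uCoef α j * α j ^ (i : ℕ)
    else uCoef α j * Lam α k r j

/-- The parity check matrix `H_1`. -/
def H1 {F : Type*} [Field F] {n : ℕ} (α : Fin n → F) (k r : ℕ) :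
    Matrix (Fin (n - k + 1)) (Fin (n + 1)) F :=
  Matrix.of fun i j =>
    if hj : (j : ℕ) < n then
      (if (i : ℕ) < n - k - 1 then uCoef α ⟨j, hj⟩ * α ⟨j, hj⟩ ^ (i : ℕ)
       else if (i : ℕ) = n - k - 1 then uCoef α ⟨j, hj⟩ * Lam α k r ⟨j, hj⟩
       else uCoef α ⟨j, hj⟩ * α ⟨j, hj⟩ ^ (n - k - 1))
    else (if (i : ℕ) = n - k then -1 else 0)

/-- The parity check matrix `H_2` (case `2 ≤ r`), with parameter `b`. -/
def H2 {F : Type*} [Field F] {n : ℕ} (α : Fin n → F) (k r : ℕ) (b : F) :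
    Matrix (Fin (n - k + 2)) (Fin (n + 2)) F :=
  Matrix.of fun i j =>
    if hj : (j : ℕ) < n then
      (if (i : ℕ) < n - k - 1 then uCoef α ⟨j, hj⟩ * α ⟨j, hj⟩ ^ (i : ℕ)
       else if (i : ℕ) = n - k - 1 then uCoef α ⟨j, hj⟩ * Lam α k r ⟨j, hj⟩
       else if (i : ℕ) = n - k then uCoef α ⟨j, hj⟩ * α ⟨j, hj⟩ ^ (n - k - 1)
       else uCoef α ⟨j, hj⟩ * α ⟨j, hj⟩ ^ (n - k))
    else if (j : ℕ) = n then
      (if (i : ℕ) = n - k then -1 else if (i : ℕ) = n - k + 1 then b else 0)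
    else (if (i : ℕ) = n - k + 1 then -1 else 0)

/-- The parity check matrix `H_2` in the case `r = 1`: the last row is
`(u_1 α_1^{n−k+1}, …, u_n α_n^{n−k+1}, δ − S_2, −1)` where
`S_2 = (∑ α_i)² − ∑_{i<j} α_i α_j`. -/
def H2r1 {F : Type*} [Field F] {n : ℕ} (α : Fin n → F) (k : ℕ) (δ : F) :
    Matrix (Fin (n - k + 2)) (Fin (n + 2)) F :=
  Matrix.of fun i j =>
    if hj : (j : ℕ) < n then
      (if (i : ℕ) < n - k - 1 then uCoef α ⟨j, hj⟩ * α ⟨j, hj⟩ ^ (i : ℕ)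
       else if (i : ℕ) = n - k - 1 then uCoef α ⟨j, hj⟩ * Lam α k 1 ⟨j, hj⟩
       else if (i : ℕ) = n - k then uCoef α ⟨j, hj⟩ * α ⟨j, hj⟩ ^ (n - k - 1)
       else uCoef α ⟨j, hj⟩ * α ⟨j, hj⟩ ^ (n - k + 1))
    else if (j : ℕ) = n then
      (if (i : ℕ) = n - k then -1
       else if (i : ℕ) = n - k + 1 then
         δ - ((∑ s, α s) ^ 2 - ∑ s : Fin n, ∑ t ∈ Finset.Ioi s, α s * α t)
       else 0)
    else (if (i : ℕ) = n - k + 1 then -1 else 0)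


/-!
The map `p ↦ ∑ i, u_i p(α_i)` is the divided difference at the nodes `α`: by Lagrange
interpolation it returns the coefficient of `X ^ (n - 1)` when `deg p < n`, and it kills every
multiple of the nodal polynomial `∏ i, (X - α_i)`. Hence `∑ i, u_i α_i ^ m` is `0` for
`m < n - 1` and `1` for `m = n - 1`, and the Vieta formulas for the nodal polynomial turn the
resulting linear recurrence into `σ_1` for `m = n` and `σ_1 ^ 2 - σ_2 = S_2` for `m = n + 1`.
These four values make every entry of `G_2 H_2ᵀ` vanish.

On the first `n` coordinates the rows of `G_2` and `H_2` are weighted evaluations at the `α_i`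
of polynomials of pairwise distinct degrees below `n`, so both families are linearly independent;
since `k + (n - k + 2) = n + 2`, the row space of `H_2` is then all of `C_2^⊥`.
-/

open Polynomial

section Vieta

variable {F : Type*} [CommRing F] {n : ℕ} (α : Fin n → F)

@[simp]
lemma esymmV_zero : esymmV 0 α = 1 := by
  simp [esymmV]

lemma esymmV_one : esymmV 1 α = ∑ i, α i := by
  simp [esymmV, powersetCard_one, sum_map]

lemma esymmV_two : esymmV 2 α = ∑ s, ∑ t ∈ Ioi s, α s * α t := by
  rw [esymmV, sum_sigma']
  refine (sum_bij (fun p _ => ({p.1, p.2} : Finset (Fin n))) ?_ ?_ ?_ ?_).symm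
  · rintro ⟨s, t⟩ hp
    simp only [mem_sigma, mem_univ, mem_Ioi, true_and] at hp
    rw [mem_powersetCard_univ, card_pair hp.ne]
  · rintro ⟨s, t⟩ hp ⟨s', t'⟩ hp' h
    simp only [mem_sigma, mem_univ, mem_Ioi, true_and] at hp hp'
    have h' : ({s, t} : Set (Fin n)) = {s', t'} := by
      simpa using congrArg (fun A : Finset (Fin n) => (A : Set (Fin n))) h
    rcases Set.pair_eq_pair_iff.mp h' with ⟨rfl, rfl⟩ | ⟨rfl, rfl⟩
    · rfl
    · exact absurd hp' hp.not_gt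
  · intro A hA
    obtain ⟨a, b, hab, rfl⟩ := card_eq_two.mp (mem_powersetCard_univ.mp hA)
    rcases hab.lt_or_gt with h | h
    · exact ⟨⟨a, b⟩, by simpa using h, rfl⟩
    · exact ⟨⟨b, a⟩, by simpa using h, pair_comm b a⟩
  · rintro ⟨s, t⟩ hp
    simp only [mem_sigma, mem_univ, mem_Ioi, true_and] at hp
    rw [prod_pair hp.ne]

lemma coeff_nodal_univ {c : ℕ} (hc : c ≤ n) :
    (Lagrange.nodal univ α).coeff c = (-1) ^ (n - c) * esymmV (n - c) α := by
  have hcard : Multiset.card (univ.val.map α) = n := by simp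
  have hprod : Lagrange.nodal univ α = ((univ.val.map α).map fun t => X - C t).prod := by
    rw [Lagrange.nodal_eq, prod_eq_multiset_prod, Multiset.map_map]
    rfl
  rw [hprod, Multiset.prod_X_sub_C_coeff _ (hcard.symm ▸ hc), hcard, esymm_map_val]
  rfl

end Vieta

section DividedDifference

variable {F : Type*} [Field F] {n : ℕ} (α : Fin n → F)

noncomputable def dividedDiff : F[X] →ₗ[F] F := ∑ i, uCoef α i • leval (α i)

lemma dividedDiff_apply (p : F[X]) : dividedDiff α p = ∑ i, uCoef α i * p.eval (α i) := by
  simp [dividedDiff]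

lemma dividedDiff_mul_nodal (p : F[X]) : dividedDiff α (p * Lagrange.nodal univ α) = 0 := by
  simp [dividedDiff_apply, Lagrange.eval_nodal_at_node]

lemma sum_coeff_nodal_mul_dividedDiff_X_pow (m : ℕ) :
    ∑ c ∈ range (n + 1),
      (Lagrange.nodal univ α).coeff c * dividedDiff α (X ^ (m + c)) = 0 := by
  have hdeg : (Lagrange.nodal univ α).natDegree = n := by simp [Lagrange.natDegree_nodal]
  rw [← dividedDiff_mul_nodal α (X ^ m)]
  conv_rhs => rw [(Lagrange.nodal univ α).as_sum_range_C_mul_X_pow' (n := n + 1) (by omega)]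
  rw [mul_sum, map_sum]
  refine sum_congr rfl fun c _ => ?_
  rw [mul_left_comm, ← pow_add, C_mul', map_smul, smul_eq_mul]

variable {α} (hα : Function.Injective α)
include hα

lemma uCoef_ne_zero (i : Fin n) : uCoef α i ≠ 0 :=
  prod_ne_zero_iff.mpr fun _ hj =>
    inv_ne_zero (sub_ne_zero_of_ne fun h => (mem_erase.mp hj).1 (hα h).symm)

lemma dividedDiff_eq_coeff {p : F[X]} (hp : p.degree < n) :
    dividedDiff α p = p.coeff (n - 1) := by
  have h := Lagrange.coeff_eq_sum (s := univ) hα.injOn (by simpa using hp)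
  simp only [card_univ, Fintype.card_fin] at h
  simp [h, dividedDiff_apply, uCoef, div_eq_inv_mul, prod_inv_distrib]

lemma dividedDiff_X_pow_of_lt {m : ℕ} (hm : m + 1 < n) : dividedDiff α (X ^ m) = 0 := by
  rw [dividedDiff_eq_coeff hα (by rw [degree_X_pow]; exact_mod_cast (by omega : m < n)),
    coeff_X_pow, if_neg (by omega)]

lemma dividedDiff_X_pow_of_add_one_eq {m : ℕ} (hm : m + 1 = n) : dividedDiff α (X ^ m) = 1 := by
  rw [dividedDiff_eq_coeff hα (by rw [degree_X_pow]; exact_mod_cast (by omega : m < n)),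
    coeff_X_pow, if_pos (by omega)]

lemma dividedDiff_X_pow_self (hn : 0 < n) : dividedDiff α (X ^ n) = ∑ i, α i := by
  obtain ⟨n, rfl⟩ : ∃ m, n = m + 1 := ⟨n - 1, by omega⟩
  have hpred := dividedDiff_X_pow_of_add_one_eq hα (rfl : n + 1 = n + 1)
  have h := sum_coeff_nodal_mul_dividedDiff_X_pow α 0
  rw [sum_range_succ, sum_range_succ, sum_eq_zero fun c hc =>
    by rw [dividedDiff_X_pow_of_lt hα (by simp at hc; omega), mul_zero]] at h
  simp only [coeff_nodal_univ α n.le_succ, coeff_nodal_univ α le_rfl, zero_add,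
    Nat.add_sub_cancel_left, Nat.sub_self, hpred, esymmV_one, esymmV_zero] at h
  linear_combination h

lemma dividedDiff_X_pow_succ_self (hn : 2 ≤ n) :
    dividedDiff α (X ^ (n + 1)) = (∑ i, α i) ^ 2 - ∑ s, ∑ t ∈ Ioi s, α s * α t := by
  obtain ⟨n, rfl⟩ : ∃ m, n = m + 2 := ⟨n - 2, by omega⟩
  have hpred := dividedDiff_X_pow_of_add_one_eq hα (rfl : n + 1 + 1 = n + 2)
  have hself := dividedDiff_X_pow_self hα (by omega)
  have h := sum_coeff_nodal_mul_dividedDiff_X_pow α 1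
  rw [sum_range_succ, sum_range_succ, sum_range_succ, sum_eq_zero fun c hc =>
    by rw [dividedDiff_X_pow_of_lt hα (by simp at hc; omega), mul_zero]] at h
  simp only [coeff_nodal_univ α (by omega : n ≤ n + 2),
    coeff_nodal_univ α (by omega : n + 1 ≤ n + 2), coeff_nodal_univ α le_rfl,
    show n + 2 - n = 2 by omega, show n + 2 - (n + 1) = 1 by omega, Nat.sub_self,
    show 1 + n = n + 1 by omega, show 1 + (n + 1) = n + 2 by omega,
    show 1 + (n + 2) = n + 2 + 1 by omega, hpred, hself, esymmV_zero, esymmV_one, esymmV_two] at h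
  linear_combination h

end DividedDifference

section LinearIndependence

variable {K : Type*} [Field K] {ι : Type*}

theorem Polynomial.linearIndependent_of_injective_degree {q : ι → K[X]} (hq : ∀ i, q i ≠ 0)
    (hdeg : Function.Injective (degree ∘ q)) : LinearIndependent K q := by
  rw [linearIndependent_iff']
  intro s g hsum i hi
  by_contra hgi
  have hdegree_smul : ∀ j, g j ≠ 0 → (g j • q j).degree = (q j).degree := fun j hj => by
    rw [smul_eq_C_mul, degree_C_mul hj]
  have hpairwise : Set.Pairwise {j | j ∈ s ∧ g j • q j ≠ 0}
      (Function.onFun Ne (degree ∘ fun j => g j • q j)) := by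
    rintro x ⟨-, hx⟩ y ⟨-, hy⟩ hxy
    simp only [Function.onFun, Function.comp_apply, hdegree_smul x (left_ne_zero_of_smul hx),
      hdegree_smul y (left_ne_zero_of_smul hy)]
    exact hdeg.ne hxy
  have hle : (q i).degree ≤ ⊥ := by
    rw [← hdegree_smul i hgi, ← degree_zero (R := K), ← hsum,
      degree_sum_eq_of_disjoint _ s hpairwise]
    exact le_sup (f := fun j => (g j • q j).degree) hi
  exact hq i (degree_eq_bot.mp (le_bot_iff.mp hle))

theorem linearIndependent_weighted_eval {n : ℕ} {α w : Fin n → K} (hα : Function.Injective α)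
    (hw : ∀ j, w j ≠ 0) {q : ι → K[X]} (hq : LinearIndependent K q)
    (hdeg : ∀ i, (q i).degree < n) :
    LinearIndependent K (fun i j => w j * (q i).eval (α j)) := by
  let E : K[X] →ₗ[K] Fin n → K := LinearMap.pi fun j => w j • leval (α j)
  refine hq.map (f := E) (Submodule.disjoint_def.mpr fun p hp hpE => ?_)
  have hpn : p.degree < n := by
    refine mem_degreeLT.mp (Submodule.span_le.mpr ?_ hp)
    rintro _ ⟨i, rfl⟩
    exact mem_degreeLT.mpr (hdeg i)
  refine eq_zero_of_degree_lt_of_eval_index_eq_zero univ hα.injOn (by simpa using hpn)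
    fun j _ => ?_
  have hj := congrFun (LinearMap.mem_ker.mp hpE) j
  simpa [E, hw j] using hj

theorem LinearIndependent.of_comp_castSucc_castSucc {m : ℕ} {v : ι → Fin (m + 2) → K}
    (hv : LinearIndependent K fun i (j : Fin m) => v i j.castSucc.castSucc) :
    LinearIndependent K v :=
  hv.of_comp (LinearMap.funLeft K K fun j : Fin m => j.castSucc.castSucc)

end LinearIndependence

section ParityCheck

variable {F : Type*} [Field F] {k l m : ℕ}

lemma dualSet_rowSpan (G : Matrix (Fin k) (Fin m) F) :
    dualSet (rowSpan G : Set (Fin m → F)) = LinearMap.ker G.mulVecLin := by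
  ext x
  simp only [dualSet, SetLike.mem_coe, LinearMap.mem_ker, Set.mem_ofPred_eq, mulVecLin_apply]
  constructor
  · intro h
    funext i
    rw [mulVec, dotProduct_comm]
    exact h _ (Submodule.subset_span ⟨i, rfl⟩)
  · intro h c hc
    induction hc using Submodule.span_induction with
    | mem c hc =>
      obtain ⟨i, rfl⟩ := hc
      simpa [mulVec, dotProduct, mul_comm] using congrFun h i
    | zero => simp
    | add c d _ _ hc hd => simp [mul_add, sum_add_distrib, hc, hd]
    | smul a c _ hc => simp [mul_left_comm _ a, ← mul_sum, hc]

theorem rowSpan_eq_dualSet_of_mul_transpose_eq_zero {G : Matrix (Fin k) (Fin m) F}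
    {H : Matrix (Fin l) (Fin m) F} (hGH : G * Hᵀ = 0) (hG : LinearIndependent F fun i => G i)
    (hH : LinearIndependent F fun i => H i) (hm : k + l = m) :
    (rowSpan H : Set (Fin m → F)) = dualSet (rowSpan G : Set (Fin m → F)) := by
  rw [dualSet_rowSpan, SetLike.coe_set_eq]
  refine Submodule.eq_of_le_of_finrank_eq ?_ ?_
  · refine Submodule.span_le.mpr ?_
    rintro _ ⟨t, rfl⟩
    ext i
    simpa [mul_apply, mulVec, dotProduct] using congrFun₂ hGH i t
  · have hrank : G.rank = k := by
      rw [rank_eq_finrank_span_row]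
      exact (finrank_span_eq_card hG).trans (Fintype.card_fin k)
    have hnullity := LinearMap.finrank_range_add_finrank_ker G.mulVecLin
    rw [← Matrix.rank, hrank, Module.finrank_fin_fun] at hnullity
    rw [rowSpan, finrank_span_eq_card hH, Fintype.card_fin]
    omega

end ParityCheck

section Matrices

variable {F : Type*} [Field F] {n : ℕ} (α : Fin n → F) (k : ℕ) (δ : F)

@[simp]
lemma G2_apply_castSucc_castSucc (r : ℕ) (i : Fin k) (j : Fin n) :
    G2 α k r δ i j.castSucc.castSucc = α j ^ expo k r i := by
  simp [G2]

@[simp]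
lemma G2_apply_castSucc_last (r : ℕ) (i : Fin k) :
    G2 α k r δ i (Fin.last n).castSucc = if (i : ℕ) = k - 1 then 1 else 0 := by
  simp [G2]

@[simp]
lemma G2_apply_last (r : ℕ) (i : Fin k) :
    G2 α k r δ i (Fin.last (n + 1)) =
      if (i : ℕ) = k - 2 then 1 else if (i : ℕ) = k - 1 then δ else 0 := by
  simp [G2]

noncomputable def H2r1RowPoly (t : Fin (n - k + 2)) : F[X] :=
  if (t : ℕ) < n - k - 1 then X ^ (t : ℕ)
  else if (t : ℕ) = n - k - 1 then X ^ (n - k) - C (∑ s, α s) * X ^ (n - k - 1)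
  else if (t : ℕ) = n - k then X ^ (n - k - 1)
  else X ^ (n - k + 1)

lemma Lam_one (j : Fin n) : Lam α k 1 j = α j ^ (n - k) - (∑ s, α s) * α j ^ (n - k - 1) := by
  simp [Lam, sum_range_succ, esymmV_one]
  ring

@[simp]
lemma H2r1_apply_castSucc_castSucc (t : Fin (n - k + 2)) (j : Fin n) :
    H2r1 α k δ t j.castSucc.castSucc = uCoef α j * (H2r1RowPoly α k t).eval (α j) := by
  simp only [H2r1, H2r1RowPoly, of_apply, Fin.val_castSucc, j.isLt, dite_true, Lam_one]
  split_ifs <;> simp only [eval_sub, eval_mul, eval_C, eval_pow, eval_X, mul_sub]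

@[simp]
lemma H2r1_apply_castSucc_last (t : Fin (n - k + 2)) :
    H2r1 α k δ t (Fin.last n).castSucc =
      if (t : ℕ) = n - k then -1
      else if (t : ℕ) = n - k + 1 then
        δ - ((∑ s, α s) ^ 2 - ∑ s : Fin n, ∑ u ∈ Ioi s, α s * α u)
      else 0 := by
  simp [H2r1]

@[simp]
lemma H2r1_apply_last (t : Fin (n - k + 2)) :
    H2r1 α k δ t (Fin.last (n + 1)) = if (t : ℕ) = n - k + 1 then -1 else 0 := by
  simp [H2r1]

end Matrices

section ParityCheckH2r1

variable {F : Type*} [Field F] {n : ℕ} {α : Fin n → F} {k : ℕ} (δ : F)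

lemma sum_pow_mul_uCoef_mul_eval (e : ℕ) (p : F[X]) :
    ∑ j, α j ^ e * (uCoef α j * p.eval (α j)) = dividedDiff α (X ^ e * p) := by
  simp [dividedDiff_apply, mul_left_comm]

theorem G2_mul_H2r1_transpose (hα : Function.Injective α) (hk : 2 ≤ k) (hkn : k < n) :
    G2 α k 1 δ * (H2r1 α k δ)ᵀ = 0 := by
  ext i t
  rw [mul_apply, Fin.sum_univ_castSucc, Fin.sum_univ_castSucc]
  simp only [transpose_apply, G2_apply_castSucc_castSucc, G2_apply_castSucc_last, G2_apply_last,
    H2r1_apply_castSucc_castSucc, H2r1_apply_castSucc_last, H2r1_apply_last,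
    sum_pow_mul_uCoef_mul_eval, H2r1RowPoly, Matrix.zero_apply]
  have hi := i.isLt
  have ht := t.isLt
  have hexpo : expo k 1 i = if (i : ℕ) = k - 1 then k else i := by
    simp only [expo]
    split_ifs <;> omega
  rw [hexpo]
  -- each of the 3 × 4 kinds of entries reduces to values of `dividedDiff α (X ^ m)`, `m ≤ n + 1`
  rcases (by omega : (i : ℕ) < k - 2 ∨ (i : ℕ) = k - 2 ∨ (i : ℕ) = k - 1)
    with hi' | hi' | hi' <;>
  rcases (by omega : (t : ℕ) < n - k - 1 ∨ (t : ℕ) = n - k - 1 ∨ (t : ℕ) = n - k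
      ∨ (t : ℕ) = n - k + 1) with ht' | ht' | ht' | ht' <;>
  simp (disch := omega) only [if_pos, if_neg, ← pow_add, mul_sub, map_sub, C_mul',
    mul_smul_comm, map_smul, smul_eq_mul, ← add_assoc, Nat.add_sub_cancel',
    dividedDiff_X_pow_of_lt hα, dividedDiff_X_pow_of_add_one_eq hα,
    dividedDiff_X_pow_self hα (by omega : 0 < n),
    dividedDiff_X_pow_succ_self hα (by omega : 2 ≤ n)]
  all_goals ring

lemma degree_H2r1RowPoly (hkn : k < n) (t : Fin (n - k + 2)) :
    (H2r1RowPoly α k t).degree = ↑(if (t : ℕ) < n - k - 1 then (t : ℕ)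
      else if (t : ℕ) = n - k - 1 then n - k else if (t : ℕ) = n - k then n - k - 1
      else n - k + 1) := by
  unfold H2r1RowPoly
  split_ifs
  · exact degree_X_pow _
  · rw [degree_sub_eq_left_of_degree_lt] <;> rw [degree_X_pow]
    exact (degree_C_mul_X_pow_le _ _).trans_lt (by exact_mod_cast (by omega : n - k - 1 < n - k))
  all_goals exact degree_X_pow _

lemma linearIndependent_H2r1RowPoly (hkn : k < n) : LinearIndependent F (H2r1RowPoly α k) := by
  refine linearIndependent_of_injective_degree (fun t => ?_) fun s t hst => ?_
  · rw [← degree_ne_bot, degree_H2r1RowPoly hkn]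
    exact WithBot.coe_ne_bot
  · have hs := s.isLt
    have ht := t.isLt
    simp only [Function.comp_apply, degree_H2r1RowPoly hkn, Nat.cast_inj] at hst
    ext
    split_ifs at hst <;> omega

theorem linearIndependent_H2r1 (hα : Function.Injective α) (hk : 2 ≤ k) (hkn : k < n) :
    LinearIndependent F fun t => H2r1 α k δ t := by
  refine .of_comp_castSucc_castSucc ?_
  simp only [H2r1_apply_castSucc_castSucc]
  refine linearIndependent_weighted_eval hα (uCoef_ne_zero hα) (linearIndependent_H2r1RowPoly hkn)
    fun t => ?_
  rw [degree_H2r1RowPoly hkn]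
  exact_mod_cast (by split_ifs <;> omega)

theorem linearIndependent_G2 (hα : Function.Injective α) (hkn : k < n) :
    LinearIndependent F fun i => G2 α k 1 δ i := by
  have hexpo_lt : ∀ i, expo k 1 i < n := fun i => by
    have := i.isLt
    simp only [expo]
    split_ifs <;> omega
  have hpow : LinearIndependent F fun i => (X : F[X]) ^ expo k 1 i := by
    refine linearIndependent_of_injective_degree (fun _ => pow_ne_zero _ X_ne_zero) fun i i' h => ?_
    simp only [Function.comp_apply, degree_X_pow, Nat.cast_inj, expo] at h
    ext
    split_ifs at h <;> omega
  refine .of_comp_castSucc_castSucc ?_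
  simpa using linearIndependent_weighted_eval hα (fun _ => one_ne_zero) hpow
    fun i => by rw [degree_X_pow]; exact_mod_cast hexpo_lt i

end ParityCheckH2r1

theorem H2r1_parity_check_general {F : Type*} [Field F] {n : ℕ}
    (α : Fin n → F) (hα : Function.Injective α) (δ : F) (k : ℕ)
    (h6 : 6 ≤ 2 * k) (hkn : 2 * k ≤ n) :
    G2 α k 1 δ * (H2r1 α k δ)ᵀ = 0 ∧
    LinearIndependent F (fun i => H2r1 α k δ i) ∧
    (rowSpan (H2r1 α k δ) : Set (Fin (n + 2) → F))
      = dualSet (rowSpan (G2 α k 1 δ) : Set (Fin (n + 2) → F)) := by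
  have hk : 2 ≤ k := by omega
  have hkn' : k < n := by omega
  have hGH := G2_mul_H2r1_transpose δ hα hk hkn'
  have hH := linearIndependent_H2r1 δ hα hk hkn'
  have hG := linearIndependent_G2 δ hα hkn'
  exact ⟨hGH, hH, rowSpan_eq_dualSet_of_mul_transpose_eq_zero hGH hG hH (by omega)⟩

/-- Proposition 5.2: for `r = 1`, `H_2` is a parity check matrix for the code `C_2`
generated by `G_2`. -/
theorem H2r1_parity_check {F : Type*} [Field F] [Fintype F] {n : ℕ}
    (α : Fin n → F) (hα : Function.Injective α) (δ : F) (k : ℕ)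
    (h6 : 6 ≤ 2 * k) (hkn : 2 * k ≤ n) :
    G2 α k 1 δ * (H2r1 α k δ)ᵀ = 0 ∧
    LinearIndependent F (fun i => H2r1 α k δ i) ∧
    (rowSpan (H2r1 α k δ) : Set (Fin (n + 2) → F))
      = dualSet (rowSpan (G2 α k 1 δ) : Set (Fin (n + 2) → F)) :=
  H2r1_parity_check_general α hα δ k h6 hkn
end

section
/- Let β_1,…,β_{k−1} be pairwise distinct elements of a finite field F_q, let δ ∈ F_q, and let k, r be integers with k ≥ 3 and 2 ≤ r ≤ k−1. Let B be the k×k matrix over F_q whose rows are indexed, from top to bottom, by the exponents e ∈ {0,1,…,k−r−1} ∪ {k−r+1,…,k} in increasing order, whose j-th column (1 ≤ j ≤ k−1) has entries β_j^e, and whose last column has entry 1 in the row of exponent k−1, entry δ in the row of exponent k, and 0 in all other rows. Then det(B) = (∏_{1≤s<t≤k−1}(β_t − β_s)) · (δ·σ_{r−1}(β_1,…,β_{k−1}) − σ_1(β_1,…,β_{k−1})·σ_{r−1}(β_1,…,β_{k−1}) + σ_r(β_1,…,β_{k−1})). -/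
open Finset Matrix

open Polynomial

lemma succAbove_mk_val {n t : ℕ} (ht : t < n + 1) (i : Fin n) :
    (((⟨t, ht⟩ : Fin (n + 1))).succAbove i : ℕ) = if (i : ℕ) < t then (i : ℕ) else (i : ℕ) + 1 := by
  simp only [Fin.succAbove, Fin.lt_def, Fin.coe_castSucc]
  split_ifs <;> simp

lemma vand_cons {R : Type*} [CommRing R] {n : ℕ} (x : R) (g : Fin n → R) :
    vand (Fin.cons x g) = (∏ j, (g j - x)) * vand g := by
  unfold vand
  rw [Fin.prod_univ_succ]
  congr 1
  · rw [Fin.prod_Ioi_zero]; simp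
  · refine Finset.prod_congr rfl fun i _ => ?_
    rw [Fin.prod_Ioi_succ]; simp

lemma esymmV_eq_multiset {R : Type*} [CommRing R] {n : ℕ} (t : ℕ) (x : Fin n → R) :
    esymmV t x = (Multiset.map x Finset.univ.val).esymm t := by
  rw [Finset.esymm_map_val]; rfl

lemma esymmV_one_s15 {R : Type*} [CommRing R] {n : ℕ} (x : Fin n → R) :
    esymmV 1 x = ∑ i, x i := by
  simp [esymmV, Finset.powersetCard_one]

lemma prod_X_sub_C_coeff' {R : Type*} [CommRing R] {n : ℕ} (α : Fin n → R) {m : ℕ} (h : m ≤ n) :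
    (∏ i, (X - C (α i))).coeff m = (-1) ^ (n - m) * esymmV (n - m) α := by
  have h1 : (∏ i, (X - C (α i))) = ((Multiset.map α Finset.univ.val).map fun t => X - C t).prod := by
    rw [Multiset.map_map]; rfl
  have hc : Multiset.card (Multiset.map α Finset.univ.val) = n := by simp
  rw [h1, Multiset.prod_X_sub_C_coeff _ (by rw [hc]; exact h), hc, esymmV_eq_multiset]

lemma core {R : Type*} [CommRing R] {n : ℕ} (e : Fin (n + 1) → ℕ) (he : Function.Injective e)
    (v : Fin n → R) (i0 : Fin (n + 1)) :
    (Matrix.of fun i j : Fin (n + 1) =>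
        (Fin.cons (α := fun _ => R[X]) X (fun s => C (v s)) j) ^ e i).det.coeff (e i0)
      = (-1) ^ (i0 : ℕ) *
        (Matrix.of fun i j : Fin n => v j ^ e (i0.succAbove i)).det := by
  set w : Fin (n + 1) → R[X] := Fin.cons (α := fun _ => R[X]) X (fun s => C (v s)) with hw
  rw [Matrix.det_succ_column_zero]
  have hdet : ∀ i : Fin (n + 1),
      ((Matrix.of fun i j : Fin (n + 1) => (w j) ^ e i).submatrix i.succAbove Fin.succ).det
      = C ((Matrix.of fun i' j' : Fin n => v j' ^ e (i.succAbove i')).det) := by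
    intro i
    rw [RingHom.map_det, RingHom.mapMatrix_apply]
    congr 1
    ext i' j'
    simp [hw, Matrix.submatrix_apply, Matrix.map_apply, ← map_pow]
  have hterm : ∀ i : Fin (n + 1),
      ((-1) ^ (i : ℕ) * (Matrix.of fun i j : Fin (n + 1) => (w j) ^ e i) i 0 *
        ((Matrix.of fun i j : Fin (n + 1) => (w j) ^ e i).submatrix i.succAbove Fin.succ).det).coeff (e i0)
      = if e i0 = e i then
          (-1) ^ (i : ℕ) * (Matrix.of fun i' j' : Fin n => v j' ^ e (i.succAbove i')).det
        else 0 := by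
    intro i
    rw [hdet i]
    have h0 : (Matrix.of fun i j : Fin (n + 1) => (w j) ^ e i) i 0 = X ^ e i := by simp [hw]
    rw [h0]
    set d := (Matrix.of fun i' j' : Fin n => v j' ^ e (i.succAbove i')).det with hd
    have hre : ((-1 : R[X]) ^ (i : ℕ) * X ^ e i * C d)
        = C ((-1) ^ (i : ℕ) * d) * X ^ e i := by
      rw [C_mul, C_pow, C_neg, C_1]; ring
    rw [hre, Polynomial.coeff_C_mul, Polynomial.coeff_X_pow]
    split_ifs <;> simp
  rw [Polynomial.finset_sum_coeff, Finset.sum_congr rfl fun i _ => hterm i,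
    Finset.sum_eq_single i0]
  · simp
  · intro b _ hb
    rw [if_neg fun h => hb (he h.symm)]
  · intro h; exact absurd (Finset.mem_univ i0) h

lemma vand_C {R : Type*} [CommRing R] {n : ℕ} (v : Fin n → R) :
    vand (fun s => C (v s)) = C (vand v) := by
  simp [vand, map_prod, map_sub]

lemma onegap {R : Type*} [CommRing R] {n t : ℕ} (ht : t ≤ n) (v : Fin n → R) :
    (Matrix.of fun i j : Fin n =>
        v j ^ (if (i : ℕ) < t then (i : ℕ) else (i : ℕ) + 1)).det
      = esymmV (n - t) v * vand v := by
  have ht' : t < n + 1 := by omega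
  have hcore := core (R := R) (fun i : Fin (n + 1) => (i : ℕ)) Fin.val_injective v ⟨t, ht'⟩
  have hMeq : (Matrix.of fun i j : Fin n => v j ^ (((⟨t, ht'⟩ : Fin (n+1)).succAbove i : ℕ)))
      = (Matrix.of fun i j : Fin n =>
          v j ^ (if (i : ℕ) < t then (i : ℕ) else (i : ℕ) + 1)) := by
    ext i j; rw [Matrix.of_apply, Matrix.of_apply, succAbove_mk_val]
  rw [hMeq] at hcore
  -- compute the big det
  have h1 : (Matrix.of fun i j : Fin (n + 1) =>
      (Fin.cons (α := fun _ => R[X]) X (fun s => C (v s)) j) ^ ((i : Fin (n+1)) : ℕ))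
      = (Matrix.vandermonde (Fin.cons (α := fun _ => R[X]) X (fun s => C (v s))))ᵀ := by
    ext i j; simp [Matrix.vandermonde]
  have hneg : (∏ j, (C (v j) - X)) = (-1 : R[X]) ^ n * ∏ j, (X - C (v j)) := by
    calc (∏ j, (C (v j) - X)) = ∏ j : Fin n, ((-1) * (X - C (v j))) :=
          Finset.prod_congr rfl fun j _ => by ring
    _ = (∏ _j : Fin n, (-1 : R[X])) * ∏ j, (X - C (v j)) := Finset.prod_mul_distrib
    _ = (-1 : R[X]) ^ n * ∏ j, (X - C (v j)) := by rw [Finset.prod_const]; simp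
  have hdetMx : (Matrix.of fun i j : Fin (n + 1) =>
      (Fin.cons (α := fun _ => R[X]) X (fun s => C (v s)) j) ^ ((i : Fin (n+1)) : ℕ)).det
      = C ((-1) ^ n * vand v) * ∏ j, (X - C (v j)) := by
    rw [h1, Matrix.det_transpose, Matrix.det_vandermonde]
    have : (∏ i : Fin (n+1), ∏ j ∈ Finset.Ioi i,
        ((Fin.cons (α := fun _ => R[X]) X (fun s => C (v s))) j
          - (Fin.cons (α := fun _ => R[X]) X (fun s => C (v s))) i))
        = vand (Fin.cons (α := fun _ => R[X]) X (fun s => C (v s))) := rfl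
    rw [this, vand_cons, vand_C, hneg]
    rw [C_mul, C_pow, C_neg, C_1]
    ring
  rw [hdetMx] at hcore
  have hco : (C ((-1 : R) ^ n * vand v) * ∏ j, (X - C (v j))).coeff t
      = (-1 : R) ^ n * vand v * ((-1) ^ (n - t) * esymmV (n - t) v) := by
    rw [Polynomial.coeff_C_mul, prod_X_sub_C_coeff' v ht]
  rw [hco] at hcore
  -- hcore : ... = (-1)^t * D
  have hsgn : ((-1 : R) ^ (t : ℕ)) * ((-1) ^ n * vand v * ((-1) ^ (n - t) * esymmV (n - t) v))
      = esymmV (n - t) v * vand v := by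
    have h2 : ((-1 : R) ^ t) * ((-1) ^ n) * ((-1) ^ (n - t)) = 1 := by
      rw [← pow_add, ← pow_add, show t + n + (n - t) = 2 * n by omega, pow_mul]
      norm_num
    calc ((-1 : R) ^ t) * ((-1) ^ n * vand v * ((-1) ^ (n - t) * esymmV (n - t) v))
        = (((-1 : R) ^ t) * ((-1) ^ n) * ((-1) ^ (n - t))) * (esymmV (n - t) v * vand v) := by ring
    _ = esymmV (n - t) v * vand v := by rw [h2, one_mul]
  have hself : ((-1 : R) ^ (t : ℕ)) * ((-1 : R) ^ (t : ℕ)) = 1 := by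
    rw [← pow_add, show t + t = 2 * t by omega, pow_mul]; norm_num
  calc (Matrix.of fun i j : Fin n =>
        v j ^ (if (i : ℕ) < t then (i : ℕ) else (i : ℕ) + 1)).det
      = (((-1 : R) ^ t) * ((-1 : R) ^ t)) *
        (Matrix.of fun i j : Fin n =>
          v j ^ (if (i : ℕ) < t then (i : ℕ) else (i : ℕ) + 1)).det := by rw [hself, one_mul]
  _ = ((-1 : R) ^ t) * ((-1 : R) ^ n * vand v * ((-1) ^ (n - t) * esymmV (n - t) v)) := by
        rw [mul_assoc, ← hcore]
  _ = esymmV (n - t) v * vand v := hsgn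

lemma twogap {R : Type*} [CommRing R] {n r : ℕ} (hr2 : 2 ≤ r) (hrn : r ≤ n) (v : Fin n → R) :
    (Matrix.of fun i j : Fin n =>
        v j ^ (if (i : ℕ) < n + 1 - r then (i : ℕ)
               else if (i : ℕ) < n - 1 then (i : ℕ) + 1 else (i : ℕ) + 2)).det
      = (esymmV 1 v * esymmV (r - 1) v - esymmV r v) * vand v := by
  have hi0 : n + 1 - r < n + 1 := by omega
  set e : Fin (n + 1) → ℕ := fun x => if (x : ℕ) < n then (x : ℕ) else (x : ℕ) + 1 with he_def
  have he : Function.Injective e := by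
    intro a b h
    apply Fin.val_injective
    have ha := a.isLt; have hb := b.isLt
    revert h; simp only [he_def]
    split_ifs <;> omega
  have hcore := core (R := R) e he v ⟨n + 1 - r, hi0⟩
  have hei0 : e ⟨n + 1 - r, hi0⟩ = n + 1 - r := by
    simp only [he_def]; rw [if_pos]; omega
  rw [hei0] at hcore
  -- identify the small matrix
  have hMeq : (Matrix.of fun i j : Fin n => v j ^ e ((⟨n + 1 - r, hi0⟩ : Fin (n+1)).succAbove i))
      = (Matrix.of fun i j : Fin n =>
          v j ^ (if (i : ℕ) < n + 1 - r then (i : ℕ)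
                 else if (i : ℕ) < n - 1 then (i : ℕ) + 1 else (i : ℕ) + 2)) := by
    ext i j
    rw [Matrix.of_apply, Matrix.of_apply]
    congr 1
    have hi := i.isLt
    simp only [he_def, succAbove_mk_val hi0 i]
    split_ifs <;> omega
  rw [hMeq] at hcore
  -- compute the big det via onegap over R[X]
  set w : Fin (n + 1) → R[X] := Fin.cons (α := fun _ => R[X]) X (fun s => C (v s)) with hw
  have hshape : (Matrix.of fun i j : Fin (n + 1) => (w j) ^ e i)
      = (Matrix.of fun i j : Fin (n + 1) =>
          (w j) ^ (if (i : ℕ) < n then (i : ℕ) else (i : ℕ) + 1)) := rfl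
  have hesw : esymmV 1 w = X + C (esymmV 1 v) := by
    rw [esymmV_one_s15, Fin.sum_univ_succ]
    simp [hw, esymmV_one_s15, map_sum]
  have hneg : (∏ j, (C (v j) - X)) = (-1 : R[X]) ^ n * ∏ j, (X - C (v j)) := by
    calc (∏ j, (C (v j) - X)) = ∏ j : Fin n, ((-1) * (X - C (v j))) :=
          Finset.prod_congr rfl fun j _ => by ring
    _ = (∏ _j : Fin n, (-1 : R[X])) * ∏ j, (X - C (v j)) := Finset.prod_mul_distrib
    _ = (-1 : R[X]) ^ n * ∏ j, (X - C (v j)) := by rw [Finset.prod_const]; simp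
  have hdetMx : (Matrix.of fun i j : Fin (n + 1) => (w j) ^ e i).det
      = C ((-1) ^ n * vand v) * ((X + C (esymmV 1 v)) * ∏ j, (X - C (v j))) := by
    rw [hshape, onegap (by omega : n ≤ n + 1) w]
    rw [show n + 1 - n = 1 by omega, hesw, hw, vand_cons, vand_C, hneg]
    rw [C_mul, C_pow, C_neg, C_1]
    ring
  rw [hdetMx] at hcore
  -- compute the coefficient
  have hP1 : (∏ j, (X - C (v j))).coeff (n - r) = (-1 : R) ^ r * esymmV r v := by
    rw [prod_X_sub_C_coeff' v (by omega : n - r ≤ n), show n - (n - r) = r by omega]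
  have hP2 : (∏ j, (X - C (v j))).coeff (n + 1 - r) = (-1 : R) ^ (r - 1) * esymmV (r - 1) v := by
    rw [prod_X_sub_C_coeff' v (by omega : n + 1 - r ≤ n), show n - (n + 1 - r) = r - 1 by omega]
  have hco : (C ((-1 : R) ^ n * vand v) * ((X + C (esymmV 1 v)) * ∏ j, (X - C (v j)))).coeff (n + 1 - r)
      = (-1 : R) ^ n * vand v *
        ((-1 : R) ^ r * esymmV r v + esymmV 1 v * ((-1 : R) ^ (r - 1) * esymmV (r - 1) v)) := by
    rw [Polynomial.coeff_C_mul, add_mul, Polynomial.coeff_add,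
      show n + 1 - r = (n - r) + 1 by omega, Polynomial.coeff_X_mul,
      Polynomial.coeff_C_mul, hP1, show (n - r) + 1 = n + 1 - r by omega, hP2]
  rw [hco] at hcore
  -- sign juggling
  have hs1 : ((-1 : R) ^ (n + 1 - r)) * ((-1) ^ n) * ((-1) ^ r) = -1 := by
    rw [← pow_add, ← pow_add, show n + 1 - r + n + r = 2 * n + 1 by omega, pow_succ, pow_mul]
    norm_num
  have hs2 : ((-1 : R) ^ (n + 1 - r)) * ((-1) ^ n) * ((-1) ^ (r - 1)) = 1 := by
    rw [← pow_add, ← pow_add, show n + 1 - r + n + (r - 1) = 2 * n by omega, pow_mul]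
    norm_num
  have hself : ((-1 : R) ^ (n + 1 - r)) * ((-1 : R) ^ (n + 1 - r)) = 1 := by
    rw [← pow_add, show (n + 1 - r) + (n + 1 - r) = 2 * (n + 1 - r) by omega, pow_mul]
    norm_num
  set D := (Matrix.of fun i j : Fin n =>
        v j ^ (if (i : ℕ) < n + 1 - r then (i : ℕ)
               else if (i : ℕ) < n - 1 then (i : ℕ) + 1 else (i : ℕ) + 2)).det with hD
  calc D = (((-1 : R) ^ (n + 1 - r)) * ((-1 : R) ^ (n + 1 - r))) * D := by rw [hself, one_mul]
  _ = ((-1 : R) ^ (n + 1 - r)) *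
      ((-1 : R) ^ n * vand v *
        ((-1 : R) ^ r * esymmV r v + esymmV 1 v * ((-1 : R) ^ (r - 1) * esymmV (r - 1) v))) := by
      rw [mul_assoc, ← hcore]
  _ = (((-1 : R) ^ (n + 1 - r)) * ((-1) ^ n) * ((-1) ^ r)) * (esymmV r v * vand v)
      + (((-1 : R) ^ (n + 1 - r)) * ((-1) ^ n) * ((-1) ^ (r - 1))) *
        (esymmV 1 v * esymmV (r - 1) v * vand v) := by ring
  _ = (esymmV 1 v * esymmV (r - 1) v - esymmV r v) * vand v := by rw [hs1, hs2]; ring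

/-- The determinant computation in the proof of Theorem 5.5:
`det B = ∏_{s<t}(β_t − β_s) · (δ σ_{r−1}(β) − σ_1(β) σ_{r−1}(β) + σ_r(β))`,
where `B` has columns `(β_j^e)_e` for the exponents `e ∈ {0,…,k−r−1} ∪ {k−r+1,…,k}`
together with the column with `1` in the row of exponent `k−1` and `δ` in the row
of exponent `k`. -/
theorem det_B3 {F : Type*} [Field F] [Fintype F] {k r : ℕ}
    (hk : 3 ≤ k) (hr2 : 2 ≤ r) (hrk : r ≤ k - 1)
    (β : Fin (k - 1) → F) (hβ : Function.Injective β) (δ : F) :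
    (Matrix.of fun (i j : Fin k) =>
        if hj : (j : ℕ) < k - 1 then β ⟨j, hj⟩ ^ expo k r i
        else if expo k r i = k - 1 then 1
        else if expo k r i = k then δ
        else 0).det
      = vand β * (δ * esymmV (r - 1) β - esymmV 1 β * esymmV (r - 1) β + esymmV r β) := by
  obtain ⟨n, rfl⟩ : ∃ n, k = n + 1 := ⟨k - 1, by omega⟩
  have hn2 : 2 ≤ n := by omega
  have hrn : r ≤ n := by omega
  have hlt1 : n - 1 < n + 1 := by omega
  set B : Matrix (Fin (n + 1)) (Fin (n + 1)) F := Matrix.of fun (i j : Fin (n + 1)) =>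
        if hj : (j : ℕ) < n + 1 - 1 then β ⟨j, hj⟩ ^ expo (n + 1) r i
        else if expo (n + 1) r i = n + 1 - 1 then 1
        else if expo (n + 1) r i = n + 1 then δ
        else 0 with hB
  rw [Matrix.det_succ_column B (Fin.last n)]
  have hBlast : ∀ i : Fin (n + 1), B i (Fin.last n)
      = if expo (n + 1) r i = n + 1 - 1 then 1
        else if expo (n + 1) r i = n + 1 then δ else 0 := by
    intro i
    rw [hB, Matrix.of_apply, dif_neg (by simp only [Fin.val_last]; omega)]
  have hexpo : ∀ i : Fin (n + 1), expo (n + 1) r i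
      = if (i : ℕ) < n + 1 - r then (i : ℕ) else (i : ℕ) + 1 := fun i => rfl
  -- collapse the sum to two terms
  have hzero : ∀ i ∈ Finset.univ, i ∉ ({(⟨n - 1, hlt1⟩ : Fin (n + 1)), Fin.last n} : Finset (Fin (n+1))) →
      (-1 : F) ^ ((i : ℕ) + (Fin.last n : ℕ)) * B i (Fin.last n) *
        (B.submatrix i.succAbove (Fin.last n).succAbove).det = 0 := by
    intro i _ hi
    simp only [Finset.mem_insert, Finset.mem_singleton, not_or] at hi
    obtain ⟨h1, h2⟩ := hi
    have hv1 : (i : ℕ) ≠ n - 1 := fun h => h1 (Fin.ext h)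
    have hv2 : (i : ℕ) ≠ n := fun h => h2 (Fin.ext (by simp [Fin.val_last, h]))
    have hiLt := i.isLt
    rw [hBlast i, if_neg (by rw [hexpo]; split_ifs <;> omega),
      if_neg (by rw [hexpo]; split_ifs <;> omega)]
    ring
  rw [← Finset.sum_subset (Finset.subset_univ _) hzero,
    Finset.sum_pair (by intro h; have := congrArg Fin.val h; simp [Fin.val_last] at this; omega)]
  -- the two entries
  have hE1 : B (⟨n - 1, hlt1⟩ : Fin (n + 1)) (Fin.last n) = 1 := by
    rw [hBlast, if_pos]
    rw [hexpo]
    simp only []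
    rw [if_neg (by simp; omega)]
    simp; omega
  have hE2 : B (Fin.last n) (Fin.last n) = δ := by
    rw [hBlast, if_neg (by rw [hexpo]; simp [Fin.val_last]; omega),
      if_pos (by rw [hexpo]; simp [Fin.val_last]; omega)]
  -- the two minors
  have hM1 : (B.submatrix (⟨n - 1, hlt1⟩ : Fin (n + 1)).succAbove (Fin.last n).succAbove)
      = (Matrix.of fun i j : Fin n =>
          β j ^ (if (i : ℕ) < n + 1 - r then (i : ℕ)
                 else if (i : ℕ) < n - 1 then (i : ℕ) + 1 else (i : ℕ) + 2)) := by
    ext i j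
    rw [Fin.succAbove_last, Matrix.submatrix_apply, hB, Matrix.of_apply, Matrix.of_apply,
      dif_pos (by simp only [Fin.coe_castSucc]; omega)]
    have hiLt := i.isLt
    have hidx : ∀ (h : (↑(Fin.castSucc j) : ℕ) < n + 1 - 1),
        (⟨(↑(Fin.castSucc j) : ℕ), h⟩ : Fin (n + 1 - 1)) = j := fun h => Fin.ext (by simp)
    rw [hidx]
    congr 1
    rw [hexpo, succAbove_mk_val]
    split_ifs <;> omega
  have hM2 : (B.submatrix (Fin.last n).succAbove (Fin.last n).succAbove)
      = (Matrix.of fun i j : Fin n =>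
          β j ^ (if (i : ℕ) < n + 1 - r then (i : ℕ) else (i : ℕ) + 1)) := by
    ext i j
    rw [Fin.succAbove_last, Matrix.submatrix_apply, hB, Matrix.of_apply, Matrix.of_apply,
      dif_pos (by simp only [Fin.coe_castSucc]; omega)]
    have hidx : ∀ (h : (↑(Fin.castSucc j) : ℕ) < n + 1 - 1),
        (⟨(↑(Fin.castSucc j) : ℕ), h⟩ : Fin (n + 1 - 1)) = j := fun h => Fin.ext (by simp)
    rw [hidx]
    congr 1
  -- signs
  have hS1 : (-1 : F) ^ (((⟨n - 1, hlt1⟩ : Fin (n + 1)) : ℕ) + (Fin.last n : ℕ)) = -1 := by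
    simp only [Fin.val_last]
    exact Odd.neg_one_pow ⟨n - 1, by omega⟩
  have hS2 : (-1 : F) ^ (((Fin.last n) : ℕ) + (Fin.last n : ℕ)) = 1 := by
    simp only [Fin.val_last]
    exact Even.neg_one_pow ⟨n, rfl⟩
  rw [hE1, hE2, hM1, hM2, hS1, hS2, twogap hr2 hrn β,
    onegap (show n + 1 - r ≤ n by omega) β, show n - (n + 1 - r) = r - 1 by omega]
  ring
end

section
/- Let α_1,…,α_n be pairwise distinct elements of a finite field F_q, let δ ∈ F_q, and let k be an integer with 3 ≤ k ≤ n; take r = 1. Then every k×k submatrix of G_2 is nonsingular (equivalently, the code C_2 generated by G_2 is an [n+2,k] MDS code) if and only if both of the following hold: ∑_{s=1}^{k} α_{i_s} ≠ 0 for every k-element subset {i_1,…,i_k} of {1,…,n}, and δ − (∑_{s=1}^{k−1} α_{i_s})² + ∑_{1≤s<t≤k−1} α_{i_s} α_{i_t} ≠ 0 for every (k−1)-element subset {i_1,…,i_{k−1}} of {1,…,n}. -/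
/-!
Expanding along the appended columns, a `k × k` minor of `G_2` on nodes `x` (the chosen `α`'s) is,
up to sign, `V(x)` if it uses the column `e_k`, `V(x) σ₁(x)` if it uses neither appended column
(exponents `{0, …, k-2, k}`), and `V(x) (δ - σ₁(x)² + σ₂(x))` if it uses only `(0, …, 0, 1, δ)ᵀ`,
because the exponents `{0, …, k-3, k}` give `V(x) (σ₁² - σ₂)(x)`. Here `V` is the Vandermonde
determinant; the two generalized Vandermonde determinants are coefficients of the Vandermonde
determinant with `X` adjoined as a node, which is `V(x) ∏ (X - x_i)`.
-/

open Finset Matrix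

open Polynomial

theorem Fin.prod_Ioi_castSucc {M : Type*} [CommMonoid M] {N : ℕ} (f : Fin (N + 1) → M)
    (i : Fin N) : ∏ j ∈ Ioi i.castSucc, f j = (∏ j ∈ Ioi i, f j.castSucc) * f (Fin.last N) := by
  rw [← Finset.filter_lt_eq_Ioi, ← Finset.filter_lt_eq_Ioi, Finset.prod_filter,
    Finset.prod_filter, Fin.prod_univ_castSucc]
  simp [Fin.castSucc_lt_last]

@[simp]
theorem Fin.Ioi_last (N : ℕ) : Ioi (Fin.last N) = ∅ :=
  Finset.Ioi_eq_empty.mpr fun b _ => Fin.le_last b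

theorem expo_strictMono (k r : ℕ) : StrictMono (expo k r) := by
  intro i j h
  rw [Fin.lt_def] at h
  simp only [expo]
  split_ifs <;> omega

theorem expo_castSucc {N : ℕ} (i : Fin N) : expo (N + 1) 1 i.castSucc = i := by
  simp [expo]

theorem val_succAbove_castSucc_last {N : ℕ} (i : Fin (N + 1)) :
    ((Fin.last N).castSucc.succAbove i : ℕ) = expo (N + 1) 1 i := by
  rcases Fin.eq_castSucc_or_eq_last i with ⟨i, rfl⟩ | rfl
  · simp [Fin.succAbove_castSucc_of_lt _ _ (Fin.castSucc_lt_last i), expo_castSucc]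
  · simp [Fin.succAbove_of_le_castSucc _ _ le_rfl, expo]

section Determinants

variable {R : Type*} [CommRing R]

theorem Matrix.det_vandermonde_snoc {N : ℕ} (v : Fin N → R) (a : R) :
    (vandermonde (Fin.snoc v a : Fin (N + 1) → R)).det
      = (vandermonde v).det * ∏ i, (a - v i) := by
  simp [det_vandermonde, Fin.prod_univ_castSucc, Fin.prod_Ioi_castSucc, Finset.prod_mul_distrib]

theorem Matrix.det_vandermonde_map {S : Type*} [CommRing S] (f : R →+* S) {N : ℕ}
    (v : Fin N → R) :
    (vandermonde fun i => f (v i)).det = f (vandermonde v).det := by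
  rw [RingHom.map_det]
  congr 1
  ext i j
  simp

theorem Matrix.det_of_pow_eq_det_vandermonde {N : ℕ} (v : Fin N → R) :
    (of fun i j : Fin N => v j ^ (i : ℕ)).det = (vandermonde v).det := by
  rw [← det_transpose]; rfl

theorem prod_X_sub_C_coeff_card_sub_one {N : ℕ} (x : Fin (N + 1) → R) :
    (∏ i, (X - C (x i))).coeff N = -∑ i, x i := by
  simpa using prod_X_sub_C_coeff_card_pred univ x (by simp)

theorem prod_X_sub_C_coeff_card_sub_two {N : ℕ} (x : Fin (N + 2) → R) :
    (∏ i, (X - C (x i))).coeff N = ∑ s, ∑ t ∈ Ioi s, x s * x t := by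
  induction N with
  | zero => simp [Fin.prod_univ_two, Fin.sum_univ_two, coeff_zero_eq_eval_zero,
      show Ioi (1 : Fin 2) = ∅ from Fin.Ioi_last 1]
  | succ N ih =>
    rw [Fin.prod_univ_succ, coeff_X_sub_C_mul, ih, prod_X_sub_C_coeff_card_sub_one,
      Fin.sum_univ_succ (fun s => ∑ t ∈ Ioi s, x s * x t), Fin.sum_Ioi_zero]
    simp only [Fin.sum_Ioi_succ, ← Finset.mul_sum]
    ring

theorem coeff_det_pow_snoc_X {N : ℕ} (e : Fin (N + 1) → ℕ) (he : Function.Injective e)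
    (x : Fin N → R) (i : Fin (N + 1)) :
    (of fun a b => (Fin.snoc (fun j => C (x j)) X : Fin (N + 1) → R[X]) b ^ e a).det.coeff (e i)
      = (-1) ^ (i + N : ℕ) * (of fun a b => x b ^ e (i.succAbove a)).det := by
  set M : Matrix (Fin (N + 1)) (Fin (N + 1)) R[X] :=
    of fun a b => (Fin.snoc (fun j => C (x j)) X : Fin (N + 1) → R[X]) b ^ e a
  have hterm : ∀ a : Fin (N + 1), (-1) ^ (a + N : ℕ) * M a (Fin.last N)
      * (M.submatrix a.succAbove (Fin.last N).succAbove).det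
        = C ((-1) ^ (a + N : ℕ) * (of fun a' b => x b ^ e (a.succAbove a')).det) * X ^ e a := by
    intro a
    have hminor : M.submatrix a.succAbove (Fin.last N).succAbove
        = C.mapMatrix (of fun a' b => x b ^ e (a.succAbove a')) := by
      ext a' b
      simp [M, Fin.succAbove_last]
    rw [hminor, ← RingHom.map_det]
    simp only [M, of_apply, Fin.snoc_last, map_mul, map_pow, map_neg, map_one]
    ring
  rw [det_succ_column _ (Fin.last N)]
  simp only [Fin.val_last]
  rw [finsetSum_coeff, Finset.sum_eq_single i]
  · rw [hterm, coeff_C_mul_X_pow, if_pos rfl]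
  · intro a _ hai
    rw [hterm, coeff_C_mul_X_pow, if_neg (he.ne (Ne.symm hai))]
  · simp

theorem det_of_pow_expo_one {N : ℕ} (x : Fin (N + 1) → R) :
    (of fun i j => x j ^ expo (N + 1) 1 i).det = (vandermonde x).det * ∑ j, x j := by
  have key := coeff_det_pow_snoc_X Fin.val Fin.val_injective x (Fin.last N).castSucc
  simp only [Fin.val_castSucc, Fin.val_last, val_succAbove_castSucc_last] at key
  rw [det_of_pow_eq_det_vandermonde, det_vandermonde_snoc, det_vandermonde_map, coeff_C_mul,
    prod_X_sub_C_coeff_card_sub_one] at key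
  rw [show N + (N + 1) = 2 * N + 1 by ring, pow_succ, pow_mul, neg_one_sq, one_pow] at key
  linear_combination key

theorem det_of_pow_expo_one_succAbove {N : ℕ} (x : Fin (N + 2) → R) :
    (of fun i j => x j ^ expo (N + 3) 1 ((Fin.last (N + 1)).castSucc.succAbove i)).det
      = (vandermonde x).det * ((∑ j, x j) ^ 2 - ∑ s, ∑ t ∈ Ioi s, x s * x t) := by
  have key := coeff_det_pow_snoc_X (expo (N + 3) 1) (expo_strictMono _ _).injective x
    (Fin.last (N + 1)).castSucc
  have hsum : ∑ j, (Fin.snoc (fun j => C (x j)) X : Fin (N + 3) → R[X]) j = C (∑ j, x j) + X := by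
    simp [Fin.sum_univ_castSucc, map_sum]
  rw [det_of_pow_expo_one, det_vandermonde_snoc, det_vandermonde_map, hsum, expo_castSucc,
    mul_assoc, coeff_C_mul, mul_add, coeff_add, coeff_mul_C, Fin.val_last, coeff_mul_X,
    prod_X_sub_C_coeff_card_sub_one, prod_X_sub_C_coeff_card_sub_two] at key
  simp only [Fin.val_castSucc, Fin.val_last] at key
  rw [show N + 1 + (N + 2) = 2 * (N + 1) + 1 by ring, pow_succ, pow_mul, neg_one_sq,
    one_pow] at key
  linear_combination key

theorem Matrix.det_updateCol_single {N : ℕ} (A : Matrix (Fin (N + 1)) (Fin (N + 1)) R)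
    (i j : Fin (N + 1)) :
    (A.updateCol j (Pi.single i 1)).det
      = (-1) ^ (i + j : ℕ) * (A.submatrix i.succAbove j.succAbove).det := by
  rw [← det_transpose, ← updateRow_transpose, ← adjugate_apply, adjugate_fin_succ_eq_det_submatrix,
    ← det_transpose, transpose_submatrix, transpose_transpose, add_comm]

theorem Matrix.det_eq_of_col_eq_single {N : ℕ} (A : Matrix (Fin (N + 1)) (Fin (N + 1)) R)
    {i j : Fin (N + 1)} (h : (fun a => A a j) = Pi.single i 1) :
    A.det = (-1) ^ (i + j : ℕ) * (A.submatrix i.succAbove j.succAbove).det := by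
  rw [← det_updateCol_single, ← h, updateCol_eq_self]

end Determinants

section G2

variable {F : Type*} [Field F] {n : ℕ} (α : Fin n → F) (δ : F)

@[simp]
theorem G2_apply_castAdd {k r : ℕ} (i : Fin k) (j : Fin n) :
    G2 α k r δ i (Fin.castAdd 2 j) = α j ^ expo k r i := by
  simp [G2]

theorem G2_col_natAdd_zero (N r : ℕ) :
    (fun i => G2 α (N + 1) r δ i (Fin.natAdd n 0)) = Pi.single (Fin.last N) 1 := by
  ext i
  simp [G2, Pi.single_apply, Fin.ext_iff]

theorem G2_col_natAdd_one (N r : ℕ) :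
    (fun i => G2 α (N + 2) r δ i (Fin.natAdd n 1))
      = Pi.single (Fin.last N).castSucc 1 + δ • Pi.single (Fin.last (N + 1)) 1 := by
  ext i
  simp only [G2, Pi.add_apply, Pi.smul_apply, Pi.single_apply, Fin.ext_iff]
  split_ifs <;> simp_all

theorem G2_castSucc_col_natAdd_one (N r : ℕ) :
    (fun i => G2 α (N + 2) r δ (Fin.castSucc i) (Fin.natAdd n 1)) = Pi.single (Fin.last N) 1 := by
  ext i
  simp only [G2, Pi.single_apply, Fin.ext_iff]
  split_ifs <;> simp_all
  omega

theorem det_G2_submatrix_castAdd {N : ℕ} (c : Fin (N + 1) → Fin n) :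
    ((G2 α (N + 1) 1 δ).submatrix id (Fin.castAdd 2 ∘ c)).det
      = (vandermonde (α ∘ c)).det * ∑ s, α (c s) :=
  (congrArg det (by ext; simp)).trans (det_of_pow_expo_one (α ∘ c))

theorem det_G2_submatrix_castAdd_of_expo {k M : ℕ} (ρ : Fin M → Fin k)
    (hρ : ∀ i, expo k 1 (ρ i) = i) (c : Fin M → Fin n) :
    ((G2 α k 1 δ).submatrix ρ (Fin.castAdd 2 ∘ c)).det = (vandermonde (α ∘ c)).det := by
  rw [← det_of_pow_eq_det_vandermonde]
  congr 1
  ext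
  simp [hρ]

theorem det_G2_submatrix_of_eq_natAdd_zero {N : ℕ} (c : Fin (N + 1) → Fin (n + 2))
    {a : Fin (N + 1)} (ha : c a = Fin.natAdd n 0) :
    ((G2 α (N + 1) 1 δ).submatrix id c).det
      = (-1) ^ (N + a : ℕ) * ((G2 α (N + 1) 1 δ).submatrix Fin.castSucc (c ∘ a.succAbove)).det := by
  rw [det_eq_of_col_eq_single _ (i := Fin.last N) (j := a)]
  · simp [Fin.succAbove_last]
  · simpa [ha] using G2_col_natAdd_zero α δ N 1

theorem det_G2_submatrix_castSucc_of_eq_natAdd_one {N : ℕ} (c : Fin (N + 1) → Fin (n + 2))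
    {b : Fin (N + 1)} (hb : c b = Fin.natAdd n 1) :
    ((G2 α (N + 2) 1 δ).submatrix Fin.castSucc c).det
      = (-1) ^ (N + b : ℕ) * ((G2 α (N + 2) 1 δ).submatrix (Fin.castSucc ∘ Fin.castSucc)
          (c ∘ b.succAbove)).det := by
  rw [det_eq_of_col_eq_single _ (i := Fin.last N) (j := b)]
  · simp [Fin.succAbove_last]
  · simpa [hb] using G2_castSucc_col_natAdd_one α δ N 1

theorem det_G2_submatrix_of_eq_natAdd_one {N : ℕ} (c : Fin (N + 3) → Fin (n + 2))
    {b : Fin (N + 3)} (hb : c b = Fin.natAdd n 1) (c' : Fin (N + 2) → Fin n)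
    (hc' : c ∘ b.succAbove = Fin.castAdd 2 ∘ c') :
    ((G2 α (N + 3) 1 δ).submatrix id c).det
      = (-1) ^ (N + b : ℕ) * ((vandermonde (α ∘ c')).det
          * (δ - (∑ s, α (c' s)) ^ 2 + ∑ s, ∑ t ∈ Ioi s, α (c' s) * α (c' t))) := by
  set A := (G2 α (N + 3) 1 δ).submatrix id c
  have hcol : (fun a => A a b)
      = Pi.single (Fin.last (N + 1)).castSucc 1 + δ • Pi.single (Fin.last (N + 2)) 1 := by
    simpa [A, hb] using G2_col_natAdd_one α δ (N + 1) 1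
  have hminor : ∀ i : Fin (N + 2) → Fin (N + 3),
      A.submatrix i b.succAbove = (G2 α (N + 3) 1 δ).submatrix i (Fin.castAdd 2 ∘ c') := by
    intro i
    rw [← hc']
    rfl
  rw [← updateCol_eq_self A b, hcol, det_updateCol_add, det_updateCol_smul, det_updateCol_single,
    det_updateCol_single, hminor, hminor, Fin.succAbove_last,
    det_G2_submatrix_castAdd_of_expo _ _ _ expo_castSucc]
  have hV2 : ((G2 α (N + 3) 1 δ).submatrix (Fin.last (N + 1)).castSucc.succAbove
      (Fin.castAdd 2 ∘ c')).det
        = (vandermonde (α ∘ c')).det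
          * ((∑ s, α (c' s)) ^ 2 - ∑ s, ∑ t ∈ Ioi s, α (c' s) * α (c' t)) :=
    (congrArg det (by ext; simp)).trans (det_of_pow_expo_one_succAbove (α ∘ c'))
  rw [hV2, Fin.val_castSucc, Fin.val_last, Fin.val_last]
  ring

theorem exists_injective_castAdd_comp {ι : Type*} {c : ι → Fin (n + 2)}
    (hc : Function.Injective c) (h0 : ∀ s, c s ≠ Fin.natAdd n 0) (h1 : ∀ s, c s ≠ Fin.natAdd n 1) :
    ∃ c' : ι → Fin n, Function.Injective c' ∧ c = Fin.castAdd 2 ∘ c' := by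
  have hlt : ∀ s, (c s : ℕ) < n := by
    intro s
    have h0s := Fin.val_ne_of_ne (h0 s)
    have h1s := Fin.val_ne_of_ne (h1 s)
    simp only [Fin.val_natAdd, Fin.val_zero, Fin.val_one] at h0s h1s
    omega
  have hcc' : c = Fin.castAdd 2 ∘ fun s => (c s).castLT (hlt s) := by
    ext s
    simp
  exact ⟨_, Function.Injective.of_comp (hcc' ▸ hc), hcc'⟩

theorem det_G2_submatrix_ne_zero_of_eq_natAdd_zero (hα : Function.Injective α) {N : ℕ}
    {c : Fin (N + 2) → Fin (n + 2)} (hc : Function.Injective c) {a : Fin (N + 2)}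
    (ha : c a = Fin.natAdd n 0) :
    ((G2 α (N + 2) 1 δ).submatrix id c).det ≠ 0 := by
  rw [det_G2_submatrix_of_eq_natAdd_zero α δ c ha]
  refine mul_ne_zero (by simp) ?_
  have hca : ∀ s, c (a.succAbove s) ≠ Fin.natAdd n 0 :=
    fun s h => a.succAbove_ne s (hc (h.trans ha.symm))
  by_cases hb : ∃ b, c (a.succAbove b) = Fin.natAdd n 1
  · obtain ⟨b, hb⟩ := hb
    rw [det_G2_submatrix_castSucc_of_eq_natAdd_one α δ (c ∘ a.succAbove) hb]
    refine mul_ne_zero (by simp) ?_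
    have hinj : Function.Injective (c ∘ a.succAbove) := hc.comp Fin.succAbove_right_injective
    obtain ⟨c', hc', hcc'⟩ :=
      exists_injective_castAdd_comp (c := (c ∘ a.succAbove) ∘ b.succAbove)
        (hinj.comp Fin.succAbove_right_injective) (fun s => hca _)
        (fun s h => b.succAbove_ne s (hinj (h.trans hb.symm)))
    rw [hcc', det_G2_submatrix_castAdd_of_expo _ _ (Fin.castSucc ∘ Fin.castSucc)
      fun i => (expo_castSucc _).trans (Fin.val_castSucc i)]
    exact det_vandermonde_ne_zero_iff.2 (hα.comp hc')
  · push Not at hb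
    obtain ⟨c', hc', hcc'⟩ :=
      exists_injective_castAdd_comp (hc.comp Fin.succAbove_right_injective) hca hb
    rw [hcc', det_G2_submatrix_castAdd_of_expo _ _ _ expo_castSucc]
    exact det_vandermonde_ne_zero_iff.2 (hα.comp hc')

theorem allSubNonsing_G2_of_forall_ne_zero (hα : Function.Injective α) {N : ℕ}
    (H1 : ∀ c : Fin (N + 3) → Fin n, Function.Injective c → ∑ s, α (c s) ≠ 0)
    (H2 : ∀ c : Fin (N + 2) → Fin n, Function.Injective c →
      δ - (∑ s, α (c s)) ^ 2 + ∑ s, ∑ t ∈ Ioi s, α (c s) * α (c t) ≠ 0) :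
    allSubNonsing (G2 α (N + 3) 1 δ) := by
  intro c hc
  by_cases h0 : ∃ a, c a = Fin.natAdd n 0
  · obtain ⟨a, ha⟩ := h0
    exact det_G2_submatrix_ne_zero_of_eq_natAdd_zero α δ hα hc ha
  push Not at h0
  by_cases h1 : ∃ b, c b = Fin.natAdd n 1
  · obtain ⟨b, hb⟩ := h1
    obtain ⟨c', hc', hcc'⟩ :=
      exists_injective_castAdd_comp (hc.comp Fin.succAbove_right_injective) (fun s => h0 _)
        (fun s h => b.succAbove_ne s (hc (h.trans hb.symm)))
    rw [det_G2_submatrix_of_eq_natAdd_one α δ c hb c' hcc']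
    exact mul_ne_zero (by simp) (mul_ne_zero (det_vandermonde_ne_zero_iff.2 (hα.comp hc'))
      (H2 c' hc'))
  · push Not at h1
    obtain ⟨c', hc', rfl⟩ := exists_injective_castAdd_comp hc h0 h1
    rw [det_G2_submatrix_castAdd]
    exact mul_ne_zero (det_vandermonde_ne_zero_iff.2 (hα.comp hc')) (H1 c' hc')

theorem sum_ne_zero_of_allSubNonsing_G2 {N : ℕ} (H : allSubNonsing (G2 α (N + 1) 1 δ))
    {c : Fin (N + 1) → Fin n} (hc : Function.Injective c) : ∑ s, α (c s) ≠ 0 := by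
  have h := H _ ((Fin.castAdd_injective _ _).comp hc)
  rw [det_G2_submatrix_castAdd] at h
  exact right_ne_zero_of_mul h

theorem delta_sub_sq_add_pairs_ne_zero_of_allSubNonsing_G2 {N : ℕ}
    (H : allSubNonsing (G2 α (N + 3) 1 δ)) {c : Fin (N + 2) → Fin n} (hc : Function.Injective c) :
    δ - (∑ s, α (c s)) ^ 2 + ∑ s, ∑ t ∈ Ioi s, α (c s) * α (c t) ≠ 0 := by
  set ĉ : Fin (N + 3) → Fin (n + 2) := Fin.snoc (Fin.castAdd 2 ∘ c) (Fin.natAdd n 1)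
  have hinj : Function.Injective ĉ := by
    refine Fin.snoc_injective_of_injective ((Fin.castAdd_injective _ _).comp hc) ?_
    rintro ⟨s, hs⟩
    simp [Fin.ext_iff] at hs
    omega
  have h := H ĉ hinj
  rw [det_G2_submatrix_of_eq_natAdd_one α δ ĉ (Fin.snoc_last _ _) c
    (by ext; simp [ĉ, Fin.succAbove_last])] at h
  exact right_ne_zero_of_mul (right_ne_zero_of_mul h)

end G2

theorem C2_MDS_iff_r1_general {F : Type*} [Field F] {n : ℕ}
    (α : Fin n → F) (hα : Function.Injective α) (δ : F) (k : ℕ)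
    (hk : 3 ≤ k) :
    allSubNonsing (G2 α k 1 δ) ↔
      ((∀ c : Fin k → Fin n, Function.Injective c → ∑ s, α (c s) ≠ 0) ∧
       (∀ c : Fin (k - 1) → Fin n, Function.Injective c →
          δ - (∑ s, α (c s)) ^ 2
            + ∑ s : Fin (k - 1), ∑ t ∈ Finset.Ioi s, α (c s) * α (c t) ≠ 0)) := by
  obtain ⟨N, rfl⟩ : ∃ N, k = N + 3 := ⟨k - 3, by omega⟩
  exact ⟨fun H => ⟨fun _ hc => sum_ne_zero_of_allSubNonsing_G2 α δ H hc,
      fun _ hc => delta_sub_sq_add_pairs_ne_zero_of_allSubNonsing_G2 α δ H hc⟩,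
    fun ⟨H1, H2⟩ => allSubNonsing_G2_of_forall_ne_zero α δ hα H1 H2⟩

/-- Proposition 5.6: for `r = 1`, the code `C_2` generated by `G_2` is MDS
(every `k×k` submatrix of `G_2` is nonsingular) iff `∑_{s=1}^{k} α_{i_s} ≠ 0` for every
`k`-element subset and `δ − (∑_{s} α_{i_s})² + ∑_{s<t} α_{i_s} α_{i_t} ≠ 0` for every
`(k−1)`-element subset. -/
theorem C2_MDS_iff_r1 {F : Type*} [Field F] [Fintype F] {n : ℕ}
    (α : Fin n → F) (hα : Function.Injective α) (δ : F) (k : ℕ)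
    (hk : 3 ≤ k) (hkn : k ≤ n) :
    allSubNonsing (G2 α k 1 δ) ↔
      ((∀ c : Fin k → Fin n, Function.Injective c → ∑ s, α (c s) ≠ 0) ∧
       (∀ c : Fin (k - 1) → Fin n, Function.Injective c →
          δ - (∑ s, α (c s)) ^ 2
            + ∑ s : Fin (k - 1), ∑ t ∈ Finset.Ioi s, α (c s) * α (c t) ≠ 0)) :=
  C2_MDS_iff_r1_general α hα δ k hk
end

section
/- Let β_1,…,β_{k−1} be pairwise distinct elements of a finite field F_q, let δ ∈ F_q, and let k ≥ 3 be an integer. Let B be the k×k matrix over F_q whose j-th column (1 ≤ j ≤ k−1) is (1, β_j, β_j², …, β_j^{k−2}, β_j^k)ᵀ and whose last column is (0, …, 0, 1, δ)ᵀ (entry 1 in row k−1 and δ in row k). Then det(B) = (∏_{1≤s<t≤k−1}(β_t − β_s)) · (δ − (∑_{s=1}^{k−1} β_s)² + ∑_{1≤s<t≤k−1} β_s β_t). -/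
open Finset Matrix

lemma aux_e2 {F : Type*} [CommRing F] {m : ℕ} (β : Fin m → F) :
    (∑ A ∈ (Finset.univ : Finset (Fin m)).powersetCard 2, ∏ i ∈ A, β i)
      = ∑ s : Fin m, ∑ t ∈ Finset.Ioi s, β s * β t := by
  rw [Finset.sum_sigma']
  refine (Finset.sum_bij (fun (p : Σ _ : Fin m, Fin m) (_ : p ∈ Finset.univ.sigma fun s => Finset.Ioi s) =>
      ({p.1, p.2} : Finset (Fin m))) ?_ ?_ ?_ ?_).symm
  · intro p hp
    have hlt : p.1 < p.2 := by simpa using hp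
    rw [Finset.mem_powersetCard]
    refine ⟨Finset.subset_univ _, ?_⟩
    rw [Finset.card_insert_of_notMem (by simp [hlt.ne]), Finset.card_singleton]
  · intro p hp q hq hpq
    have hp' : p.1 < p.2 := by simpa using hp
    have hq' : q.1 < q.2 := by simpa using hq
    have hpq' : ({p.1, p.2} : Finset (Fin m)) = {q.1, q.2} := hpq
    have h1 : q.1 ∈ ({p.1, p.2} : Finset (Fin m)) := by rw [hpq']; simp
    have h2 : q.2 ∈ ({p.1, p.2} : Finset (Fin m)) := by rw [hpq']; simp
    have h3 : p.1 ∈ ({q.1, q.2} : Finset (Fin m)) := by rw [← hpq']; simp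
    simp only [Finset.mem_insert, Finset.mem_singleton] at h1 h2 h3
    obtain ⟨a, b⟩ := p
    obtain ⟨a', b'⟩ := q
    simp only [] at h1 h2 h3 hp' hq' ⊢
    have : a = a' ∧ b = b' := by
      rcases h1 with h1 | h1 <;> rcases h2 with h2 | h2 <;> rcases h3 with h3 | h3 <;>
        constructor <;> (try omega) <;> (first | exact h1.symm ▸ rfl | skip) <;>
        · exfalso
          subst_vars
          first
          | exact absurd hp' (lt_irrefl _)
          | exact absurd hq' (lt_irrefl _)
          | exact absurd (hp'.trans hq') (lt_irrefl _)
          | omega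
    simp [this.1, this.2]
  · intro A hA
    have h2 : A.card = 2 := (Finset.mem_powersetCard.mp hA).2
    obtain ⟨x, y, hxy, rfl⟩ := Finset.card_eq_two.mp h2
    rcases lt_or_gt_of_ne hxy with h | h
    · exact ⟨⟨x, y⟩, by simpa using h, rfl⟩
    · exact ⟨⟨y, x⟩, by simpa using h, (Finset.pair_comm x y).symm⟩
  · intro p hp
    have hlt : p.1 < p.2 := by simpa using hp
    rw [Finset.prod_pair hlt.ne]

open Polynomial in
private lemma rowcomb {F : Type*} [Field F] (n : ℕ) (β : Fin (n + 2) → F) :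
    ∃ c : ℕ → F,
      (∀ s, (β s) ^ (n + 3) = ∑ j ∈ Finset.range (n + 2), c j * (β s) ^ j) ∧
      c (n + 1) = (∑ s, β s) ^ 2 - ∑ s : Fin (n + 2), ∑ t ∈ Finset.Ioi s, β s * β t := by
  set e1 : F := ∑ s, β s with he1
  set P : F[X] := ∏ s : Fin (n + 2), (X - C (β s)) with hP
  have hPm : P.Monic := monic_prod_of_monic _ _ fun s _ => monic_X_sub_C _
  have hPd : P.natDegree = n + 2 := by
    rw [hP, natDegree_prod_of_monic _ _ fun s _ => monic_X_sub_C _]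
    simp [natDegree_X_sub_C]
  have hcard : Multiset.card ((Finset.univ : Finset (Fin (n+2))).val.map β) = n + 2 := by simp
  have hcoeff : ∀ j : ℕ, j ≤ n + 2 → P.coeff j =
      (-1 : F) ^ (n + 2 - j) * Multiset.esymm (Finset.univ.val.map β) (n + 2 - j) := by
    intro j hj
    have hPP : P = (Multiset.map (fun t => X - C t) (Finset.univ.val.map β)).prod := by
      rw [hP, Finset.prod_eq_multiset_prod, Multiset.map_map]
      rfl
    rw [hPP, Multiset.prod_X_sub_C_coeff _ (by rw [hcard]; exact hj), hcard]
  have hc2 : P.coeff (n + 1) = -e1 := by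
    have h1 : n + 2 - (n + 1) = 1 := by omega
    rw [hcoeff (n + 1) (by omega), h1]
    rw [Finset.esymm_map_val, Finset.powersetCard_one]
    simp [he1]
  have hc3 : P.coeff n = ∑ s : Fin (n + 2), ∑ t ∈ Finset.Ioi s, β s * β t := by
    have h1 : n + 2 - n = 2 := by omega
    rw [hcoeff n (by omega), h1, Finset.esymm_map_val, ← aux_e2 β]
    simp
  have hc4 : P.coeff (n + 2) = 1 := by
    have := hPm.coeff_natDegree
    rwa [hPd] at this
  have hc5 : ∀ j, n + 2 < j → P.coeff j = 0 := fun j hj =>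
    coeff_eq_zero_of_natDegree_lt (by omega)
  set Q : F[X] := (X + C e1) * P with hQ
  have hQc : ∀ m : ℕ, Q.coeff (m + 1) = P.coeff m + e1 * P.coeff (m + 1) := by
    intro m
    rw [hQ, add_mul, coeff_add, coeff_X_mul, coeff_C_mul]
  set r : F[X] := X ^ (n + 3) - Q with hr
  have hrdeg : r.natDegree < n + 2 := by
    have h : r.natDegree ≤ n + 1 := by
      rw [natDegree_le_iff_coeff_eq_zero]
      intro m hm
      obtain ⟨m', rfl⟩ : ∃ m', m = m' + 1 := ⟨m - 1, by omega⟩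
      rw [hr, coeff_sub, coeff_X_pow, hQc m']
      rcases Nat.lt_or_ge m' (n + 2) with h | h
      · have hm' : m' = n + 1 := by omega
        subst hm'
        rw [hc2, hc4, if_neg (by omega)]
        ring
      · rcases Nat.eq_or_lt_of_le h with h | h
        · rw [← h, if_pos (by omega), hc4, hc5 _ (by omega)]
          ring
        · rw [hc5 _ (by omega), hc5 _ (by omega), if_neg (by omega)]
          ring
    omega
  refine ⟨fun j => r.coeff j, ?_, ?_⟩
  · intro s
    have hPz : P.eval (β s) = 0 := by
      rw [hP, eval_prod]
      exact Finset.prod_eq_zero (Finset.mem_univ s) (by simp)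
    have h1 : r.eval (β s) = (β s) ^ (n + 3) := by
      rw [hr, eval_sub, eval_pow, eval_X, hQ, eval_mul, hPz, mul_zero, sub_zero]
    rw [← h1, eval_eq_sum_range' hrdeg]
  · show r.coeff (n + 1) = _
    rw [hr, coeff_sub, coeff_X_pow, if_neg (show ¬(n + 1 = n + 3) by omega), hQc n, hc3, hc2]
    ring

private lemma main_aux {F : Type*} [Field F] (n : ℕ) (β : Fin (n + 2) → F) (δ : F) :
    (Matrix.of fun (i j : Fin (n + 3)) =>
        if hj : (j : ℕ) < n + 2 then
          β ⟨j, hj⟩ ^ (if (i : ℕ) < n + 2 then (i : ℕ) else (i : ℕ) + 1)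
        else if (i : ℕ) = n + 1 then 1
        else if (i : ℕ) = n + 2 then δ
        else 0).det
      = (∏ i : Fin (n + 2), ∏ j ∈ Finset.Ioi i, (β j - β i))
        * (δ - (∑ s, β s) ^ 2 + ∑ s : Fin (n + 2), ∑ t ∈ Finset.Ioi s, β s * β t) := by
  obtain ⟨c, hc, hc1⟩ := rowcomb n β
  set B : Matrix (Fin (n + 3)) (Fin (n + 3)) F := Matrix.of fun (i j : Fin (n + 3)) =>
    if hj : (j : ℕ) < n + 2 then
      β ⟨j, hj⟩ ^ (if (i : ℕ) < n + 2 then (i : ℕ) else (i : ℕ) + 1)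
    else if (i : ℕ) = n + 1 then 1
    else if (i : ℕ) = n + 2 then δ
    else 0 with hB
  set lst : Fin (n + 3) := Fin.last (n + 2) with hlst
  set c0 : F := δ - c (n + 1) with hc0
  have hlstv : (lst : ℕ) = n + 2 := rfl
  -- the sum over the erased universe equals a range sum
  have hsum : ∀ g : ℕ → F,
      ∑ m ∈ Finset.univ.erase lst, g (m : ℕ) = ∑ d ∈ Finset.range (n + 2), g d := by
    intro g
    have h1 := Finset.sum_erase_add Finset.univ (fun m : Fin (n + 3) => g (m : ℕ))
      (Finset.mem_univ lst)
    rw [Fin.sum_univ_eq_sum_range (fun d => g d) (n + 3), Finset.sum_range_succ] at h1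
    exact add_right_cancel h1
  have hmain := Matrix.det_updateRow_sum_aux B (j := lst) (s := Finset.univ.erase lst)
    (Finset.notMem_erase _ _) (fun m => -(c (m : ℕ))) 1
  have hrowval : (1 : F) • B lst + ∑ m ∈ Finset.univ.erase lst, (-(c (m : ℕ))) • B m
      = Pi.single lst c0 := by
    funext j
    simp only [Pi.add_apply, Pi.smul_apply, one_smul, Finset.sum_apply, smul_eq_mul, neg_mul]
    rw [Finset.sum_neg_distrib]
    by_cases hj : (j : ℕ) < n + 2
    · have hBl : B lst j = β ⟨j, hj⟩ ^ (n + 3) := by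
        rw [hB, Matrix.of_apply, dif_pos hj, if_neg (by omega)]
        rfl
      have hBm : ∀ m ∈ Finset.univ.erase lst, c (m : ℕ) * B m j
          = c (m : ℕ) * β ⟨j, hj⟩ ^ (m : ℕ) := by
        intro m hm
        have hmv : (m : ℕ) < n + 2 := by
          have := Finset.ne_of_mem_erase hm
          have h2 : (m : ℕ) ≠ n + 2 := fun h => this (Fin.ext h)
          omega
        rw [hB, Matrix.of_apply, dif_pos hj, if_pos hmv]
      rw [Finset.sum_congr rfl hBm, hsum (fun d => c d * β ⟨j, hj⟩ ^ d), hBl, ← hc ⟨j, hj⟩,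
        add_neg_cancel,
        Pi.single_eq_of_ne (show j ≠ lst from fun h : j = lst => by rw [h, hlstv] at hj; omega)]
    · have hjl : j = lst := Fin.ext (by omega)
      subst hjl
      have hBl : B lst lst = δ := by
        rw [hB, Matrix.of_apply, dif_neg (by omega), if_neg (by omega), if_pos hlstv]
      have hterm : ∑ m ∈ Finset.univ.erase lst, c (m : ℕ) * B m lst = c (n + 1) := by
        rw [Finset.sum_eq_single_of_mem (⟨n + 1, by omega⟩ : Fin (n + 3))]
        · rw [hB, Matrix.of_apply, dif_neg (show ¬((lst : ℕ) < n + 2) by rw [hlstv]; omega),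
            if_pos rfl, mul_one]
        · refine Finset.mem_erase.mpr ⟨fun h => ?_, Finset.mem_univ _⟩
          have h2 := congrArg Fin.val h
          rw [hlstv] at h2
          exact absurd (show n + 1 = n + 2 from h2) (by omega)
        · intro b hb hbne
          have hbv : (b : ℕ) ≠ n + 1 := fun h => hbne (Fin.ext h)
          have hbv2 : (b : ℕ) ≠ n + 2 := fun h => Finset.ne_of_mem_erase hb (Fin.ext h)
          rw [hB, Matrix.of_apply, dif_neg (by omega), if_neg hbv, if_neg hbv2, mul_zero]
      rw [hBl, hterm, Pi.single_eq_same, hc0]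
      ring
  rw [hrowval] at hmain
  have hdet : B.det = (B.updateRow lst (Pi.single lst c0)).det := by
    rw [hmain, one_smul]
  set M := B.updateRow lst (Pi.single lst c0) with hM
  have hsub : M.submatrix lst.succAbove lst.succAbove = (Matrix.vandermonde β).transpose := by
    ext i j
    rw [Matrix.submatrix_apply, hlst, Fin.succAbove_last, hM,
      Matrix.updateRow_ne (Fin.castSucc_lt_last i).ne]
    rw [hB, Matrix.of_apply, dif_pos (show ((Fin.castSucc j : Fin (n+3)) : ℕ) < n + 2 from j.isLt),
      if_pos (show ((Fin.castSucc i : Fin (n+3)) : ℕ) < n + 2 from i.isLt)]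
    rw [Matrix.transpose_apply, Matrix.vandermonde_apply]
    simp
  have hMdet : M.det = c0 * ∏ i : Fin (n + 2), ∏ j ∈ Finset.Ioi i, (β j - β i) := by
    rw [Matrix.det_succ_row M lst,
      Finset.sum_eq_single_of_mem lst (Finset.mem_univ _) (fun b _ hbne => by
        rw [hM, Matrix.updateRow_self, Pi.single_eq_of_ne hbne, mul_zero, zero_mul])]
    rw [hM, Matrix.updateRow_self, Pi.single_eq_same, hsub, Matrix.det_transpose,
      Matrix.det_vandermonde]
    have hsign : (-1 : F) ^ ((lst : ℕ) + (lst : ℕ)) = 1 := by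
      rw [hlstv, ← two_mul, pow_mul]
      norm_num
    rw [hsign, one_mul]
  rw [hdet, hMdet, hc0, hc1]
  ring

/-- The determinant computation in the proof of Proposition 5.6:
for the `k×k` matrix whose first `k−1` columns are `(1, β_j, …, β_j^{k−2}, β_j^k)ᵀ`
and whose last column is `(0,…,0,1,δ)ᵀ`,
`det B = ∏_{s<t}(β_t − β_s) · (δ − (∑ β_s)² + ∑_{s<t} β_s β_t)`. -/
theorem det_B3_r1 {F : Type*} [Field F] [Fintype F] {k : ℕ} (hk : 3 ≤ k)
    (β : Fin (k - 1) → F) (hβ : Function.Injective β) (δ : F) :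
    (Matrix.of fun (i j : Fin k) =>
        if hj : (j : ℕ) < k - 1 then β ⟨j, hj⟩ ^ expo k 1 i
        else if (i : ℕ) = k - 2 then 1
        else if (i : ℕ) = k - 1 then δ
        else 0).det
      = vand β
        * (δ - (∑ s, β s) ^ 2 + ∑ s : Fin (k - 1), ∑ t ∈ Finset.Ioi s, β s * β t) := by
  obtain ⟨n, rfl⟩ : ∃ n, k = n + 3 := ⟨k - 3, by omega⟩
  exact main_aux n β δ
end

section
/- Let q = 2^m for a positive integer m, let F_q be the finite field with q elements, and let h ≥ 2 be an integer with gcd(h, q−1) = 1. Then any three pairwise distinct vectors in the set D = {(1, x, x^h) : x ∈ F_q} ∪ {(0,1,0), (0,0,1)} ⊆ F_q³ are linearly independent over F_q (i.e. D is a hyperoval, equivalently the 3×(q+2) matrix with these vectors as columns generates an MDS code) if and only if S_{h−2}(a, b, c) ≠ 0 for all pairwise distinct a, b, c ∈ F_q. -/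
open Finset Matrix

/-- The point set `D(x^h) = {(1, x, x^h) : x ∈ F} ∪ {(0,1,0), (0,0,1)}`. -/
def Dset {F : Type*} [Field F] (h : ℕ) : Set (Fin 3 → F) :=
  {w | ∃ t : F, w = ![1, t, t ^ h]} ∪ {![0, 1, 0], ![0, 0, 1]}


/-! Three points `(1, a, a^h)` are dependent iff their alternant determinant vanishes, and that
determinant is the Vandermonde product of `a, b, c` times `S_{h-2}(a, b, c)`. A triple involving
`(0,1,0)` or `(0,0,1)` has determinant `±(a^h - b^h)`, `±(a - b)` or `±1`, and `a^h ≠ b^h` for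
`a ≠ b` because `gcd(h, q - 1) = 1` makes `x ↦ x^h` injective on `F_q`. -/

section CompleteHomogeneous

variable {R : Type*} [CommRing R]

theorem hsymmV_zero {m : ℕ} (x : Fin m → R) : hsymmV 0 x = 1 := by
  simp [hsymmV, Finset.Nat.antidiagonalTuple_zero_right]

theorem hsymmV_cons {m : ℕ} (t : ℕ) (a : R) (x : Fin m → R) :
    hsymmV t (Fin.cons a x : Fin (m + 1) → R) =
      ∑ p ∈ antidiagonal t, a ^ p.1 * hsymmV p.2 x := by
  simp only [hsymmV, Finset.mul_sum, Finset.sum_sigma']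
  refine Finset.sum_nbij' (fun d => ⟨(d 0, t - d 0), Fin.tail d⟩)
    (fun p => Fin.cons p.1.1 p.2) ?_ ?_ ?_ ?_ ?_
  · intro d hd
    rw [Finset.Nat.mem_antidiagonalTuple, Fin.sum_univ_succ] at hd
    simp only [mem_sigma, HasAntidiagonal.mem_antidiagonal, Finset.Nat.mem_antidiagonalTuple,
      Fin.tail]
    omega
  · rintro ⟨⟨i, j⟩, d⟩ hp
    simp only [mem_sigma, HasAntidiagonal.mem_antidiagonal,
      Finset.Nat.mem_antidiagonalTuple] at hp
    rw [Finset.Nat.mem_antidiagonalTuple, Fin.sum_univ_succ]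
    simp only [Fin.cons_zero, Fin.cons_succ]
    omega
  · intro d _
    exact Fin.cons_self_tail d
  · rintro ⟨⟨i, j⟩, d⟩ hp
    simp only [mem_sigma, HasAntidiagonal.mem_antidiagonal,
      Finset.Nat.mem_antidiagonalTuple] at hp
    simp only [Fin.cons_zero, Fin.tail_cons]
    congr
    omega
  · intro d _
    rw [Fin.prod_univ_succ]
    rfl

theorem hsymmV_succ_cons {m : ℕ} (t : ℕ) (a : R) (x : Fin m → R) :
    hsymmV (t + 1) (Fin.cons a x : Fin (m + 1) → R) =
      hsymmV (t + 1) x + a * hsymmV t (Fin.cons a x : Fin (m + 1) → R) := by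
  rw [hsymmV_cons, hsymmV_cons, Finset.Nat.antidiagonal_succ, sum_cons, sum_map, mul_sum]
  simp [pow_succ, mul_comm, mul_left_comm]

theorem hsymmV_one (t : ℕ) (c : R) : hsymmV t ![c] = c ^ t := by
  simp [hsymmV]

theorem sub_mul_hsymmV_two (t : ℕ) (b c : R) :
    (b - c) * hsymmV t ![b, c] = b ^ (t + 1) - c ^ (t + 1) := by
  induction t with
  | zero => simp [hsymmV_zero]
  | succ t ih =>
    rw [Matrix.vecCons, hsymmV_succ_cons, ← Matrix.vecCons, hsymmV_one]
    linear_combination b * ih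

theorem vandermonde_mul_hsymmV_three (t : ℕ) (a b c : R) :
    (a - b) * (a - c) * (b - c) * hsymmV t ![a, b, c] =
      a ^ (t + 2) * (b - c) - b ^ (t + 2) * (a - c) + c ^ (t + 2) * (a - b) := by
  induction t with
  | zero => rw [hsymmV_zero]; ring
  | succ t ih =>
    rw [Matrix.vecCons, hsymmV_succ_cons, ← Matrix.vecCons]
    linear_combination (a - b) * (a - c) * sub_mul_hsymmV_two (t + 1) b c + a * ih

end CompleteHomogeneous

theorem pow_injective_of_coprime_card_units {G₀ : Type*} [GroupWithZero G₀] {n : ℕ}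
    (hn : n ≠ 0) (h : (Nat.card G₀ˣ).Coprime n) :
    Function.Injective (· ^ n : G₀ → G₀) := by
  intro x y hxy
  simp only at hxy
  rcases eq_or_ne x 0 with rfl | hx
  · exact ((pow_eq_zero_iff hn).mp (hxy.symm.trans (zero_pow hn))).symm
  rcases eq_or_ne y 0 with rfl | hy
  · exact (pow_eq_zero_iff hn).mp (hxy.trans (zero_pow hn))
  have hunits : Units.mk0 x hx ^ n = Units.mk0 y hy ^ n := Units.ext (by simpa using hxy)
  simpa using congrArg Units.val (h.pow_left_bijective.injective hunits)

section ThreeVectors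

variable {R M : Type*} [Semiring R] [AddCommMonoid M] [Module R M] {x y z : M}

theorem linearIndependent_vec3_swap12 :
    LinearIndependent R ![x, y, z] ↔ LinearIndependent R ![y, x, z] := by
  rw [← linearIndependent_equiv (Equiv.swap (0 : Fin 3) 1)]
  convert Iff.rfl using 2
  ext i
  fin_cases i <;> rfl

theorem linearIndependent_vec3_swap23 :
    LinearIndependent R ![x, y, z] ↔ LinearIndependent R ![x, z, y] := by
  rw [← linearIndependent_equiv (Equiv.swap (1 : Fin 3) 2)]
  convert Iff.rfl using 2
  ext i
  fin_cases i <;> rfl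

end ThreeVectors

section MonomialPoints

variable {K : Type*} [Field K]

theorem linearIndependent_vec3_iff_det_ne_zero (x y z : Fin 3 → K) :
    LinearIndependent K ![x, y, z] ↔ (of ![x, y, z]).det ≠ 0 := by
  rw [← isUnit_iff_ne_zero, ← isUnit_iff_isUnit_det]
  exact linearIndependent_rows_iff_isUnit

theorem linearIndependent_monomial_points_iff (t : ℕ) {a b c : K}
    (hab : a ≠ b) (hac : a ≠ c) (hbc : b ≠ c) :
    LinearIndependent K ![![1, a, a ^ (t + 2)], ![1, b, b ^ (t + 2)], ![1, c, c ^ (t + 2)]] ↔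
      hsymmV t ![a, b, c] ≠ 0 := by
  have hdet : (of ![![1, a, a ^ (t + 2)], ![1, b, b ^ (t + 2)], ![1, c, c ^ (t + 2)]]).det =
      -((a - b) * (a - c) * (b - c) * hsymmV t ![a, b, c]) := by
    rw [det_fin_three, vandermonde_mul_hsymmV_three]
    simp only [of_apply, cons_val_zero, cons_val_one, cons_val_two, head_cons, tail_cons]
    ring
  rw [linearIndependent_vec3_iff_det_ne_zero, hdet, neg_ne_zero, mul_ne_zero_iff,
    and_iff_right (by simp [sub_eq_zero, hab, hac, hbc])]

theorem linearIndependent_monomial_points_e2_iff (n : ℕ) (a b : K) :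
    LinearIndependent K ![![1, a, a ^ n], ![1, b, b ^ n], ![0, 1, 0]] ↔ a ^ n ≠ b ^ n := by
  rw [linearIndependent_vec3_iff_det_ne_zero, det_fin_three]
  simp [neg_add_eq_zero, eq_comm]

theorem linearIndependent_monomial_points_e3_iff (n : ℕ) (a b : K) :
    LinearIndependent K ![![1, a, a ^ n], ![1, b, b ^ n], ![0, 0, 1]] ↔ a ≠ b := by
  rw [linearIndependent_vec3_iff_det_ne_zero, det_fin_three]
  simpa using sub_ne_zero.trans ne_comm

theorem linearIndependent_monomial_point_e2_e3 (n : ℕ) (a : K) :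
    LinearIndependent K ![![1, a, a ^ n], ![0, 1, 0], ![0, 0, 1]] := by
  rw [linearIndependent_vec3_iff_det_ne_zero, det_fin_three]
  simp

end MonomialPoints

theorem monomial_point_mem_Dset {K : Type*} [Field K] (h : ℕ) (a : K) :
    ![1, a, a ^ h] ∈ Dset h :=
  Or.inl ⟨a, rfl⟩

theorem linearIndependent_of_mem_Dset {K : Type*} [Field K] {t : ℕ}
    (hinj : Function.Injective (· ^ (t + 2) : K → K))
    (hS : ∀ a b c : K, a ≠ b → a ≠ c → b ≠ c → hsymmV t ![a, b, c] ≠ 0)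
    {x y z : Fin 3 → K}
    (hx : x ∈ Dset (t + 2)) (hy : y ∈ Dset (t + 2)) (hz : z ∈ Dset (t + 2))
    (hxy : x ≠ y) (hxz : x ≠ z) (hyz : y ≠ z) : LinearIndependent K ![x, y, z] := by
  -- `a` stands for a point `![1, a, a ^ (t + 2)]`, `p` for `![0, 1, 0]`, `q` for `![0, 0, 1]`.
  have indep_aaa (a b c : K) (hab : a ≠ b) (hac : a ≠ c) (hbc : b ≠ c) :=
    (linearIndependent_monomial_points_iff t hab hac hbc).mpr (hS a b c hab hac hbc)
  have indep_aap (a b : K) (hab : a ≠ b) :=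
    (linearIndependent_monomial_points_e2_iff (t + 2) a b).mpr (hinj.ne hab)
  have indep_aaq (a b : K) (hab : a ≠ b) :=
    (linearIndependent_monomial_points_e3_iff (t + 2) a b).mpr hab
  have indep_apq (a : K) := linearIndependent_monomial_point_e2_e3 (t + 2) a
  have hne {a b : K} (h : (![1, a, a ^ (t + 2)] : Fin 3 → K) ≠ ![1, b, b ^ (t + 2)]) :
      a ≠ b :=
    fun e => h (e ▸ rfl)
  simp only [Dset, Set.mem_union, Set.mem_insert_iff, Set.mem_singleton_iff] at hx hy hz
  rcases hx with ⟨a, rfl⟩ | rfl | rfl <;> rcases hy with ⟨b, rfl⟩ | rfl | rfl <;>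
    rcases hz with ⟨c, rfl⟩ | rfl | rfl
  any_goals contradiction
  · exact indep_aaa a b c (hne hxy) (hne hxz) (hne hyz)
  · exact indep_aap a b (hne hxy)
  · exact indep_aaq a b (hne hxy)
  · rw [linearIndependent_vec3_swap23]; exact indep_aap a c (hne hxz)
  · exact indep_apq a
  · rw [linearIndependent_vec3_swap23]; exact indep_aaq a c (hne hxz)
  · rw [linearIndependent_vec3_swap23]; exact indep_apq a
  · rw [linearIndependent_vec3_swap12, linearIndependent_vec3_swap23]
    exact indep_aap b c (hne hyz)
  · rw [linearIndependent_vec3_swap12]; exact indep_apq b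
  · rw [linearIndependent_vec3_swap23, linearIndependent_vec3_swap12]; exact indep_apq c
  · rw [linearIndependent_vec3_swap12, linearIndependent_vec3_swap23]
    exact indep_aaq b c (hne hyz)
  · rw [linearIndependent_vec3_swap12, linearIndependent_vec3_swap23]
    exact indep_apq b
  · rw [linearIndependent_vec3_swap23, linearIndependent_vec3_swap12,
      linearIndependent_vec3_swap23]
    exact indep_apq c

theorem oMonomial_iff_hsymm_general {F : Type*} [Field F] [Fintype F] (m : ℕ)
    (hcard : Fintype.card F = 2 ^ m) (h : ℕ) (hh : 2 ≤ h)
    (hgcd : Nat.gcd h (2 ^ m - 1) = 1) :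
    (∀ x y z : Fin 3 → F, x ∈ Dset (F := F) h → y ∈ Dset (F := F) h → z ∈ Dset (F := F) h →
        x ≠ y → x ≠ z → y ≠ z → LinearIndependent F ![x, y, z]) ↔
      (∀ a b c : F, a ≠ b → a ≠ c → b ≠ c → hsymmV (h - 2) ![a, b, c] ≠ 0) := by
  obtain ⟨t, rfl⟩ : ∃ t, h = t + 2 := ⟨h - 2, by omega⟩
  rw [Nat.add_sub_cancel]
  have hinj : Function.Injective (· ^ (t + 2) : F → F) := by
    refine pow_injective_of_coprime_card_units (by omega) ?_
    rwa [Nat.card_units, Nat.card_eq_fintype_card, hcard, Nat.coprime_comm]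
  refine ⟨fun H a b c hab hac hbc => ?_, fun hS x y z => linearIndependent_of_mem_Dset hinj hS⟩
  have hne {u v : F} (huv : u ≠ v) :
      (![1, u, u ^ (t + 2)] : Fin 3 → F) ≠ ![1, v, v ^ (t + 2)] :=
    fun e => huv (by simpa using congrFun e 1)
  exact (linearIndependent_monomial_points_iff t hab hac hbc).mp <|
    H _ _ _ (monomial_point_mem_Dset _ a) (monomial_point_mem_Dset _ b)
      (monomial_point_mem_Dset _ c) (hne hab) (hne hac) (hne hbc)

/-- Theorem 6.4: for `q = 2^m` and `gcd(h, q−1) = 1`, the monomial `x^h` is an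
`o`-polynomial (i.e. `D(x^h)` is a hyperoval: any three pairwise distinct vectors of
`D(x^h)` are linearly independent) iff `S_{h−2}(a,b,c) ≠ 0` for all pairwise
distinct `a, b, c ∈ F_q`. -/
theorem oMonomial_iff_hsymm {F : Type*} [Field F] [Fintype F] (m : ℕ) (hm : 1 ≤ m)
    (hcard : Fintype.card F = 2 ^ m) (h : ℕ) (hh : 2 ≤ h)
    (hgcd : Nat.gcd h (2 ^ m - 1) = 1) :
    (∀ x y z : Fin 3 → F, x ∈ Dset (F := F) h → y ∈ Dset (F := F) h → z ∈ Dset (F := F) h →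
        x ≠ y → x ≠ z → y ≠ z → LinearIndependent F ![x, y, z]) ↔
      (∀ a b c : F, a ≠ b → a ≠ c → b ≠ c → hsymmV (h - 2) ![a, b, c] ≠ 0) :=
  oMonomial_iff_hsymm_general m hcard h hh hgcd
end
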